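/- arXiv:1509.06660 — 7 statements merged into one kernel-verified Lean document; each statement's English description precedes it below -/
import Mathlib

section
/- Every strongly unbounded abelian group is w-divisible; that is, if an abelian group G contains a direct sum ⊕_{i∈I} A_i of subgroups with |I| = |G| and each A_i unbounded (of infinite exponent), then |nG| = |G| for every positive integer n. -/
/-- The subgroup `nG = {n • g : g ∈ G}` of an abelian group `G`. -/
def nsmulRange (n : ℕ) (G : Type) [AddCommGroup G] : AddSubgroup G :=
  (n • AddMonoidHom.id G).range

/-- Every strongly unbounded abelian group is `w`-divisible: if `G` contains an (internal)
direct sum `⊕_{i ∈ I} A_i` of subgroups with `|I| = |G|` and each `A_i` unbounded,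
then `|nG| = |G|` for every positive integer `n`. -/
theorem stronglyUnbounded_implies_wDivisible
    (G : Type) [AddCommGroup G] (I : Type) (A : I → AddSubgroup G)
    (hcard : Cardinal.mk I = Cardinal.mk G)
    (hind : iSupIndep A)
    (hub : ∀ i, ∀ n : ℕ, 0 < n → ∃ a ∈ A i, n • a ≠ 0) :
    ∀ n : ℕ, 0 < n → Cardinal.mk ↥(nsmulRange n G) = Cardinal.mk G := by
  intro n hn
  refine le_antisymm (Cardinal.mk_subtype_le _) ?_
  rw [← hcard]
  choose a ha hna using fun i => hub i n hn
  have hmem : ∀ i, n • a i ∈ nsmulRange n G := by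
    intro i
    exact ⟨a i, by simp [nsmulRange]⟩
  have hinj : Function.Injective (fun i => (⟨n • a i, hmem i⟩ : nsmulRange n G)) := by
    intro i j hij
    by_contra hne
    have hij' : n • a i = n • a j := congrArg Subtype.val hij
    have h1 : n • a i ∈ A i := (A i).nsmul_mem (ha i) n
    have h2 : n • a i ∈ ⨆ k ≠ i, A k := by
      have hj : n • a i ∈ A j := hij' ▸ (A j).nsmul_mem (ha j) n
      exact le_biSup A (Ne.symm hne) hj
    have := (hind i).le_bot (AddSubgroup.mem_inf.mpr ⟨h1, h2⟩)
    exact hna i (by simpa using this)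
  exact Cardinal.mk_le_of_injective hinj
end

section
/- Let p be a prime, τ an infinite cardinal, and G an abelian p-group with |G| = τ. If the p-rank of p^n G is at least τ for every n ∈ ℕ, then G contains a subgroup isomorphic to the direct sum of τ copies of L_p = ⊕_{n∈ℕ} ℤ(p^n). -/
/-- The `p`-rank of an abelian group: the `𝔽_p`-dimension of the `p`-socle `G[p]`. -/
noncomputable def pRank (p : ℕ) (G : Type) [AddCommGroup G] : Cardinal :=
  letI := AddSubgroup.torsionBy.zmodModule (A := G) (n := p)
  Module.rank (ZMod p) (AddSubgroup.torsionBy G p)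

open DirectSum

/-!
The subspaces `(p^n G)[p]` of the `𝔽_p`-space `G[p]` all have dimension at least `τ`, so a
transfinite greedy choice yields independent socle elements `y_{α,n} ∈ (p^n G)[p]`, one for each
`(α, n) ∈ τ × ℕ`. Writing `y_{α,n} = p^n x_{α,n}`, each `x_{α,n}` has order `p^{n+1}`, and the
`x_{α,n}` generate a direct sum of cyclic groups: a homomorphism out of a `p`-group is injective
as soon as it is injective on the socle, and on the socle of `⨁ ℤ(p^{n+1})` it is the linear
combination map of the independent family `y`.
-/

open Cardinal Set Submodule
open scoped AddSubgroup

section LinearIndependent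

variable {K : Type*} [DivisionRing K]

theorem linearIndependent_of_notMem_span_image_Iio {V ι : Type*} [AddCommGroup V] [Module K V]
    [LinearOrder ι] {v : ι → V} (h : ∀ i, v i ∉ span K (v '' Iio i)) : LinearIndependent K v := by
  classical
  rw [← linearIndepOn_univ_iff]
  refine linearIndepOn_iff_linearIndepOn_finset.2 fun t _ => ?_
  induction t using Finset.induction_on_max with
  | empty => simp
  | insert a t hlt ih =>
    rw [Finset.coe_insert]
    exact (ih (subset_univ _)).insert fun hspan =>
      h a (span_mono (image_mono fun j hj => hlt j hj) hspan)

universe u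

variable {V ι : Type u} [AddCommGroup V] [Module K V]

theorem exists_linearIndependent_forall_mem_of_mk_Iio_lt [LinearOrder ι] [WellFoundedLT ι]
    (W : ι → Submodule K V) (hW : ∀ i, #(Iio i) < Module.rank K (W i)) :
    ∃ v : ι → V, LinearIndependent K v ∧ ∀ i, v i ∈ W i := by
  have step : ∀ i (u : Iio i → V), ∃ z ∈ W i, z ∉ span K (range u) := by
    intro i u
    by_contra! h
    refine (hW i).not_ge ?_
    calc Module.rank K (W i) ≤ Module.rank K (span K (range u)) := Submodule.rank_mono h
      _ ≤ #(range u) := rank_span_le _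
      _ ≤ #(Iio i) := mk_range_le
  choose z hzW hz using step
  let v : ι → V := wellFounded_lt.fix fun i rec => z i fun j => rec j j.2
  have hv : ∀ i, v i = z i fun j => v j := wellFounded_lt.fix_eq _
  refine ⟨v, linearIndependent_of_notMem_span_image_Iio fun i => ?_, fun i => hv i ▸ hzW _ _⟩
  rw [hv i, image_eq_range]
  exact hz _ _

theorem exists_linearIndependent_forall_mem (W : ι → Submodule K V)
    (hW : ∀ i, #ι ≤ Module.rank K (W i)) :
    ∃ v : ι → V, LinearIndependent K v ∧ ∀ i, v i ∈ W i := by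
  obtain ⟨_, _, hord⟩ := exists_ord_eq_type_lt ι
  exact exists_linearIndependent_forall_mem_of_mk_Iio_lt W fun i =>
    (mk_Iio_lt i hord).trans_le (hW i)

end LinearIndependent

attribute [local instance] AddSubgroup.torsionBy.zmodModule

section PrimaryGroup

variable {p : ℕ}

theorem AddMonoidHom.injective_of_disjoint_ker_torsionBy {A B : Type*} [AddCommGroup A]
    [AddCommGroup B] (hA : ∀ a : A, ∃ n, p ^ n • a = 0) (f : A →+ B)
    (hf : Disjoint f.ker A[p]) : Function.Injective f := by
  refine (injective_iff_map_eq_zero f).2 fun a ha => ?_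
  obtain ⟨n, hn⟩ := hA a
  induction n generalizing a with
  | zero => simpa using hn
  | succ n ih =>
    have hpa : p • a = 0 :=
      ih (p • a) (by rw [map_nsmul, ha, nsmul_zero]) (by rwa [smul_smul, ← pow_succ])
    exact AddSubgroup.disjoint_def.1 hf ha (AddSubgroup.torsionBy.nsmul_iff.2 hpa)

theorem DirectSum.exists_pow_nsmul_eq_zero {ι : Type*} [DecidableEq ι] {β : ι → Type*}
    [∀ i, AddCommGroup (β i)] (h : ∀ i (b : β i), ∃ n, p ^ n • b = 0) (f : ⨁ i, β i) :
    ∃ n, p ^ n • f = 0 := by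
  induction f using DirectSum.induction_on with
  | zero => exact ⟨0, smul_zero _⟩
  | of i b =>
    obtain ⟨n, hn⟩ := h i b
    exact ⟨n, by rw [← map_nsmul, hn, map_zero]⟩
  | add f g hf hg =>
    obtain ⟨m, hm⟩ := hf
    obtain ⟨n, hn⟩ := hg
    refine ⟨m + n, ?_⟩
    rw [smul_add, pow_add, mul_smul, mul_smul, hn, smul_comm, hm, smul_zero, smul_zero, add_zero]

theorem ZMod.intCast_pow_mul_eq_zero_iff (hp : p ≠ 0) (k : ℕ) (m : ℤ) :
    ((p ^ k * m : ℤ) : ZMod (p ^ (k + 1))) = 0 ↔ (p : ℤ) ∣ m := by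
  rw [ZMod.intCast_zmod_eq_zero_iff_dvd, Nat.cast_pow, pow_succ,
    mul_dvd_mul_iff_left (pow_ne_zero _ (Int.natCast_ne_zero.2 hp))]

theorem ZMod.exists_eq_pow_mul_of_nsmul_eq_zero (hp : p ≠ 0) {k : ℕ} {c : ZMod (p ^ (k + 1))}
    (hc : p • c = 0) : ∃ m : ℤ, c = ((p ^ k * m : ℤ) : ZMod (p ^ (k + 1))) := by
  obtain ⟨n, rfl⟩ := ZMod.intCast_surjective c
  rw [nsmul_eq_mul, ← Int.cast_natCast, ← Int.cast_mul, ZMod.intCast_zmod_eq_zero_iff_dvd,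
    Nat.cast_pow, pow_succ', mul_dvd_mul_iff_left (Int.natCast_ne_zero.2 hp)] at hc
  obtain ⟨m, rfl⟩ := hc
  exact ⟨m, rfl⟩

theorem exists_injective_directSum_zmod {G ι : Type*} [AddCommGroup G] (hp : p ≠ 0)
    (k : ι → ℕ) (x : ι → G) (y : ι → G[p]) (hy : ∀ i, (y i : G) = p ^ k i • x i)
    (hli : LinearIndependent (ZMod p) y) :
    ∃ Ψ : (⨁ i, ZMod (p ^ (k i + 1))) →+ G, Function.Injective Ψ := by
  classical
  have hx : ∀ i, p ^ (k i + 1) • x i = 0 := fun i => by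
    rw [pow_succ', mul_nsmul', ← hy i]
    exact AddSubgroup.torsionBy.nsmul_iff.1 (y i).2
  let φ i : ZMod (p ^ (k i + 1)) →+ G :=
    ZMod.lift _ ⟨zmultiplesHom G (x i), by rw [zmultiplesHom_apply, natCast_zsmul, hx]⟩
  have hφ : ∀ i (m : ℤ), φ i m = m • x i := fun i m => ZMod.lift_coe _ _ _
  refine ⟨toAddMonoid φ, (toAddMonoid φ).injective_of_disjoint_ker_torsionBy (p := p)
    (DirectSum.exists_pow_nsmul_eq_zero fun i b => ⟨k i + 1, ?_⟩) ?_⟩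
  · rw [nsmul_eq_mul, ZMod.natCast_self, zero_mul]
  rw [AddSubgroup.disjoint_def]
  intro f hf hpf
  have hsocle : ∀ i, ∃ m : ℤ, f i = ((p ^ k i * m : ℤ) : ZMod _) := fun i =>
    ZMod.exists_eq_pow_mul_of_nsmul_eq_zero hp <| by
      rw [← DFinsupp.nsmul_apply, AddSubgroup.torsionBy.nsmul_iff.1 hpf, DirectSum.zero_apply]
  choose m hm using hsocle
  have hsum : toAddMonoid φ f = ∑ i ∈ f.support, m i • (y i : G) := by
    rw [toAddMonoid, DFinsupp.liftAddHom_apply, DFinsupp.sumAddHom_apply, DFinsupp.sum]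
    refine Finset.sum_congr rfl fun i _ => ?_
    rw [hm i, hφ, hy, mul_comm, mul_smul, ← Nat.cast_pow, natCast_zsmul]
  have hm0 : ∀ i ∈ f.support, (m i : ZMod p) = 0 := by
    refine linearIndependent_iff'.1 hli _ _ (Subtype.ext ?_)
    simpa [Int.cast_smul_eq_zsmul, ← hsum] using hf
  ext i
  by_cases hi : i ∈ f.support
  · rw [hm i, DirectSum.zero_apply, ZMod.intCast_pow_mul_eq_zero_iff hp,
      ← ZMod.intCast_zmod_eq_zero_iff_dvd]
    exact hm0 i hi
  · simpa using hi

theorem AddSubgroup.exists_submodule_rank_eq_pRank {G : Type} [AddCommGroup G]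
    (H : AddSubgroup G) :
    ∃ W : Submodule (ZMod p) G[p],
      Module.rank (ZMod p) W = pRank p H ∧ ∀ v ∈ W, (v : G) ∈ H := by
  have hmem (z : H[p]) : ((z : H) : G) ∈ G[p] := by
    rw [AddSubgroup.torsionBy.nsmul_iff, ← AddSubgroup.coe_nsmul,
      AddSubgroup.torsionBy.nsmul_iff.1 z.2, ZeroMemClass.coe_zero]
  let f : H[p] →ₗ[ZMod p] G[p] :=
    ((H.subtype.comp (H[p]).subtype).codRestrict _ hmem).toZModLinearMap p
  have hf : Function.Injective f := fun a b h => by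
    have h' := congrArg Subtype.val h
    exact Subtype.ext (Subtype.ext h')
  refine ⟨LinearMap.range f, rank_range_of_injective f hf, ?_⟩
  rintro _ ⟨z, rfl⟩
  exact z.1.2

end PrimaryGroup

noncomputable def DirectSum.sigmaAddEquivFinsupp (ι : Type*) {κ : Type*} (β : κ → Type*)
    [DecidableEq ι] [∀ k, AddCommMonoid (β k)] :
    (⨁ s : (_ : ι) × κ, β s.2) ≃+ (ι →₀ ⨁ k, β k) :=
  sigmaCurryEquiv.trans (finsuppLEquivDirectSum ℕ (⨁ k, β k) ι).toAddEquiv.symm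

theorem exists_subgroup_iso_Lp_powc_general
    (p : ℕ) (hp : Nat.Prime p) (τ : Cardinal) (hτ : Cardinal.aleph0 ≤ τ)
    (G : Type) [AddCommGroup G]
    (hrank : ∀ n : ℕ, τ ≤ pRank p ↥(nsmulRange (p ^ n) G)) :
    ∃ H : AddSubgroup G,
      Nonempty (↥H ≃+ (τ.out →₀ ⨁ n : ℕ, ZMod (p ^ (n + 1)))) := by
  classical
  have : Fact p.Prime := ⟨hp⟩
  choose W hW hWH using fun n => (nsmulRange (p ^ n) G).exists_submodule_rank_eq_pRank (p := p)
  have hindex : #((_ : τ.out) × ℕ) = τ := by simp [mul_aleph0_eq hτ]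
  obtain ⟨y, hli, hyW⟩ :=
    exists_linearIndependent_forall_mem (fun s : (_ : τ.out) × ℕ => W s.2) fun s =>
      hindex.trans_le ((hrank s.2).trans_eq (hW s.2).symm)
  have hlift : ∀ s : (_ : τ.out) × ℕ, ∃ x : G, (y s : G) = p ^ s.2 • x := fun s => by
    obtain ⟨x, hx⟩ := hWH _ _ (hyW s)
    exact ⟨x, by simpa using hx.symm⟩
  choose x hx using hlift
  obtain ⟨Ψ, hΨ⟩ := exists_injective_directSum_zmod hp.ne_zero (fun s => s.2) x y hx hli
  exact ⟨Ψ.range, ⟨(AddMonoidHom.ofInjective hΨ).symm.trans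
    (sigmaAddEquivFinsupp _ fun n => ZMod (p ^ (n + 1)))⟩⟩

/-- If `G` is an abelian `p`-group of infinite cardinality `τ` and `r_p(p^n G) ≥ τ` for all
`n`, then `G` contains a subgroup isomorphic to `L_p^(τ)`, where `L_p = ⊕_{n ∈ ℕ} ℤ(p^n)`. -/
theorem exists_subgroup_iso_Lp_powc
    (p : ℕ) (hp : Nat.Prime p) (τ : Cardinal) (hτ : Cardinal.aleph0 ≤ τ)
    (G : Type) [AddCommGroup G]
    (hpG : ∀ g : G, ∃ n : ℕ, p ^ n • g = 0)
    (hcard : Cardinal.mk G = τ)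
    (hrank : ∀ n : ℕ, τ ≤ pRank p ↥(nsmulRange (p ^ n) G)) :
    ∃ H : AddSubgroup G,
      Nonempty (↥H ≃+ (τ.out →₀ ⨁ n : ℕ, ZMod (p ^ (n + 1)))) :=
  exists_subgroup_iso_Lp_powc_general p hp τ hτ G hrank
end

section
/- An uncountable torsion abelian group that is w-divisible is strongly unbounded: if H is torsion, |H| > ℵ₀, and |nH| = |H| for all positive integers n, then H contains a direct sum of |H|-many unbounded subgroups. -/
/-- An abelian group is `w`-divisible if `|nG| = |G|` for every positive integer `n`. -/
def WDivisible (G : Type) [AddCommGroup G] : Prop :=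
  ∀ n : ℕ, 0 < n → Cardinal.mk ↥(nsmulRange n G) = Cardinal.mk G

/-- An abelian group is strongly unbounded if it contains an internal direct sum
`⊕_{i ∈ I} A_i` of subgroups with `|I| = |G|` and each `A_i` unbounded
(of infinite exponent). -/
def StronglyUnbounded (G : Type) [AddCommGroup G] : Prop :=
  ∃ (I : Type) (A : I → AddSubgroup G), Cardinal.mk I = Cardinal.mk G ∧
    iSupIndep A ∧ ∀ i, ∀ n : ℕ, 0 < n → ∃ a ∈ A i, n • a ≠ 0


open Cardinal Set Submodule
open scoped Nat

universe u

def nsmulKer (n : ℕ) (G : Type*) [AddCommGroup G] : AddSubgroup G :=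
  (n • AddMonoidHom.id G).ker

@[simp]
theorem mem_nsmulKer {G : Type*} [AddCommGroup G] {n : ℕ} {x : G} :
    x ∈ nsmulKer n G ↔ n • x = 0 :=
  Iff.rfl

theorem AddMonoidHom.mk_eq_mk_range_mul_mk_ker {G G' : Type u} [AddGroup G] [AddGroup G']
    (f : G →+ G') : #G = #f.range * #f.ker := by
  rw [mk_congr AddSubgroup.addGroupEquivQuotientProdAddSubgroup, mk_prod, lift_id, lift_id,
    mk_congr (QuotientAddGroup.quotientKerEquivRange f).toEquiv]

section Socle

variable {G : Type*} [AddCommGroup G]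

theorem mk_nsmulKer_mul_le (a b : ℕ) :
    #(nsmulKer (a * b) G) ≤ #(nsmulKer a G) * #(nsmulKer b G) := by
  let f := (b • AddMonoidHom.id G).comp (nsmulKer (a * b) G).subtype
  have hrange : f.range ≤ nsmulKer a G := by
    rintro _ ⟨⟨x, hx⟩, rfl⟩
    simpa [f, smul_smul] using hx
  have hker : Function.Injective fun x : f.ker => (⟨x.1.1, x.2⟩ : nsmulKer b G) := by
    intro x y h
    exact Subtype.ext (Subtype.ext (congrArg Subtype.val h :))
  rw [f.mk_eq_mk_range_mul_mk_ker]
  exact mul_le_mul' (mk_le_of_injective (AddSubgroup.inclusion_injective hrange))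
    (mk_le_of_injective hker)

theorem mk_nsmulKer_le {c : Cardinal} (hc : ℵ₀ ≤ c)
    (hpc : ∀ p : ℕ, p.Prime → #(nsmulKer p G) ≤ c) {n : ℕ} (hn : n ≠ 0) :
    #(nsmulKer n G) ≤ c := by
  induction n using Nat.recOnMul with
  | zero => exact absurd rfl hn
  | one =>
    have : nsmulKer 1 G = ⊥ := by ext; simp
    simpa [this] using (one_lt_aleph0.trans_le hc).le
  | prime p hp => exact hpc p hp
  | mul a b iha ihb =>
    obtain ⟨ha, hb⟩ := mul_ne_zero_iff.1 hn
    calc #(nsmulKer (a * b) G) ≤ #(nsmulKer a G) * #(nsmulKer b G) := mk_nsmulKer_mul_le a b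
      _ ≤ c * c := mul_le_mul' (iha ha) (ihb hb)
      _ = c := mul_eq_self hc

theorem IsAddTorsion.mk_le_of_forall_mk_nsmulKer_prime_le (hG : IsAddTorsion G) {c : Cardinal}
    (hc : ℵ₀ ≤ c) (hpc : ∀ p : ℕ, p.Prime → #(nsmulKer p G) ≤ c) : #G ≤ c := by
  have hcover : (⋃ n : ℕ, (nsmulKer (n + 1) G : Set G)) = Set.univ := by
    refine Set.eq_univ_of_forall fun x => mem_iUnion.2 ⟨addOrderOf x - 1, ?_⟩
    rw [SetLike.mem_coe, mem_nsmulKer, Nat.sub_add_cancel (hG x).addOrderOf_pos]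
    exact addOrderOf_nsmul_eq_zero x
  have hunion := mk_iUnion_le_lift fun n : ℕ => (nsmulKer (n + 1) G : Set G)
  simp_rw [hcover, mk_univ, lift_uzero, mk_nat, lift_aleph0] at hunion
  calc #G ≤ ℵ₀ * ⨆ n : ℕ, #(nsmulKer (n + 1) G) := hunion
    _ ≤ ℵ₀ * c := mul_le_mul' le_rfl (ciSup_le' fun n => mk_nsmulKer_le hc hpc n.succ_ne_zero)
    _ = c := aleph0_mul_eq hc

end Socle

theorem disjoint_span_singleton_of_prime_pow {G : Type*} [AddCommGroup G] {p k : ℕ}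
    (hp : p.Prime) {y : G} {E : Submodule ℤ G} (hy : p ^ (k + 1) • y = 0) (hyE : p ^ k • y ∉ E) :
    Disjoint (ℤ ∙ y) E := by
  rw [Submodule.disjoint_def]
  rintro _ hx hxE
  obtain ⟨c, rfl⟩ := mem_span_singleton.1 hx
  by_contra hcy
  have hc : c ≠ 0 := by rintro rfl; exact hcy (zero_smul ℤ y)
  have hpZ : Prime (p : ℤ) := Nat.prime_iff_prime_int.1 hp
  obtain ⟨b, u, hpu, rfl⟩ := WfDvdMonoid.max_power_factor hc hpZ.irreducible
  have hy' : ((p : ℤ) ^ (k + 1)) • y = 0 := by exact_mod_cast hy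
  have hbk : b ≤ k := by
    by_contra! hkb
    obtain ⟨d, rfl⟩ := Nat.exists_eq_add_of_lt hkb
    apply hcy
    rw [show (p : ℤ) ^ (k + d + 1) * u = (p ^ d * u) * p ^ (k + 1) by ring, mul_smul, hy',
      smul_zero]
  have huE : u • (p ^ k • y) ∈ E := by
    have := E.smul_mem ((p : ℤ) ^ (k - b)) hxE
    rwa [smul_smul, ← mul_assoc, ← pow_add, Nat.sub_add_cancel hbk, mul_comm, mul_smul,
      ← Nat.cast_pow, natCast_zsmul] at this
  obtain ⟨s, t, hst⟩ := hpZ.coprime_iff_not_dvd.2 hpu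
  have hpw : (p : ℤ) • (p ^ k • y) = 0 := by
    rw [natCast_zsmul, smul_smul, ← pow_succ', hy]
  have hw : p ^ k • y = t • u • (p ^ k • y) := by
    calc p ^ k • y = (s * p + t * u) • (p ^ k • y) := by rw [hst, one_smul]
      _ = t • u • (p ^ k • y) := by rw [add_smul, mul_smul, hpw, smul_zero, zero_add, mul_smul]
  exact hyE (hw ▸ E.smul_mem t huE)

theorem exists_prime_pow_dvd_factorial_pow_lt {p : ℕ} (hp : p.Prime) (n : ℕ) :
    ∃ k, p ^ k ∣ n ! ^ n ∧ n < p ^ (k + 1) := by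
  by_cases hpn : p ≤ n
  · exact ⟨n, pow_dvd_pow_of_dvd (hp.dvd_factorial.2 hpn) n,
      (Nat.lt_pow_self hp.one_lt).trans_le (Nat.pow_le_pow_right hp.pos n.le_succ)⟩
  · exact ⟨0, one_dvd _, by simpa using not_le.1 hpn⟩

section Lattice

variable {α ι κ : Type*} [CompleteLattice α] [IsModularLattice α] [IsCompactlyGenerated α]

theorem iSupIndep_of_disjoint_iSup_lt [LinearOrder ι] {f : ι → α}
    (hf : ∀ i, Disjoint (f i) (⨆ j < i, f j)) : iSupIndep f := by
  classical
  rw [iSupIndep_iff_supIndep]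
  intro s
  induction s using Finset.induction_on_max with
  | empty => exact Finset.supIndep_empty f
  | insert a s has ih =>
    exact ih.insert ((hf a).mono_right (Finset.sup_le fun j hj => le_biSup f (has j hj)))

theorem iSupIndep.iSup_fiber {f : ι → α} (hf : iSupIndep f) (g : ι → κ) :
    iSupIndep fun k => ⨆ i ∈ g ⁻¹' {k}, f i := fun k =>
  (hf.disjoint_biSup_biSup (disjoint_compl_right (a := g ⁻¹' {k}))).mono_right <|
    iSup₂_le fun _ hl => iSup₂_le fun _ hi => le_biSup f fun hik => hl (hi.symm.trans hik)

end Lattice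

theorem WellFoundedLT.exists_forall_rec {ι β : Type*} [LT ι] [WellFoundedLT ι]
    (P : (i : ι) → (∀ j < i, β) → β → Prop) (h : ∀ i f, ∃ b, P i f b) :
    ∃ y : ι → β, ∀ i, P i (fun j _ => y j) (y i) := by
  choose F hF using h
  refine ⟨wellFounded_lt.fix F, fun i => ?_⟩
  rw [wellFounded_lt.fix_eq]
  exact hF _ _

theorem mk_span_int_range_le {ι M : Type u} [AddCommGroup M] (v : ι → M) :
    #(span ℤ (range v)) ≤ max #ι ℵ₀ := by
  calc #(span ℤ (range v)) ≤ #(ι →₀ ℤ) := by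
        rw [← Finsupp.range_linearCombination]
        exact mk_le_of_surjective (f := (Finsupp.linearCombination ℤ v).rangeRestrict)
          (LinearMap.surjective_rangeRestrict _)
    _ ≤ max #ι ℵ₀ := by
        rcases isEmpty_or_nonempty ι with hι | hι
        · simp
        · simp [mk_finsupp_lift_of_infinite']

theorem exists_lt_addOrderOf_disjoint_span_singleton {H : Type} [AddCommGroup H]
    (hH : IsAddTorsion H) (huncount : ℵ₀ < #H) (hwdiv : WDivisible H) {E : Submodule ℤ H}
    (hE : #E < #H) (n : ℕ) : ∃ y : H, n < addOrderOf y ∧ Disjoint (ℤ ∙ y) E := by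
  set N := n ! ^ n
  set R := nsmulRange N H
  obtain ⟨p, hp, hpR⟩ : ∃ p : ℕ, p.Prime ∧ max #E ℵ₀ < #(nsmulKer p R) := by
    by_contra! h
    have hR := (hH.addSubgroup R).mk_le_of_forall_mk_nsmulKer_prime_le (le_max_right _ _) h
    rw [hwdiv N (by positivity)] at hR
    exact (max_lt hE huncount).not_ge hR
  obtain ⟨⟨⟨_, z, rfl⟩, hpv⟩, hvE⟩ : ∃ v : nsmulKer p R, (v : H) ∉ E := by
    by_contra! h
    have hinj : Function.Injective fun v : nsmulKer p R => (⟨v, h v⟩ : E) := fun v w hvw =>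
      Subtype.ext (Subtype.ext (congrArg Subtype.val hvw :))
    exact (hpR.trans_le ((mk_le_of_injective hinj).trans (le_max_left _ _))).false
  replace hpv : p • N • z = 0 := congrArg Subtype.val hpv
  obtain ⟨k, ⟨u, hu⟩, hnk⟩ := exists_prime_pow_dvd_factorial_pow_lt hp n
  have hy : p ^ k • u • z = N • z := by rw [smul_smul, ← hu]
  have hy' : p ^ (k + 1) • u • z = 0 := by rw [pow_succ', mul_smul, hy, hpv]
  have hyE : p ^ k • u • z ∉ E := by rwa [hy]
  have := Fact.mk hp
  refine ⟨u • z, ?_, disjoint_span_singleton_of_prime_pow hp hy' hyE⟩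
  rwa [addOrderOf_eq_prime_pow (fun h => hyE (h ▸ E.zero_mem)) hy']

theorem exists_iSupIndep_span_singleton {G ι : Type u} [AddCommGroup G] [LinearOrder ι]
    [WellFoundedLT ι] (hG : ℵ₀ < #G) (hι : ∀ i : ι, #(Iio i) < #G)
    (hext : ∀ E : Submodule ℤ G, #E < #G →
      ∀ n : ℕ, ∃ y : G, n < addOrderOf y ∧ Disjoint (ℤ ∙ y) E)
    (bound : ι → ℕ) :
    ∃ y : ι → G, iSupIndep (fun i => ℤ ∙ y i) ∧ ∀ i, bound i < addOrderOf (y i) := by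
  obtain ⟨y, hy⟩ := WellFoundedLT.exists_forall_rec
    (fun i (f : ∀ j < i, G) a => bound i < addOrderOf a ∧
      Disjoint (ℤ ∙ a) (span ℤ (range fun j : Iio i => f j j.2)))
    fun i f => hext _ ((mk_span_int_range_le _).trans_lt (max_lt (hι i) hG)) (bound i)
  refine ⟨y, iSupIndep_of_disjoint_iSup_lt fun i => (hy i).2.mono_right ?_, fun i => (hy i).1⟩
  exact iSup₂_le fun j hj => span_mono (singleton_subset_iff.2 ⟨⟨j, hj⟩, rfl⟩)

/-- An uncountable torsion `w`-divisible abelian group is strongly unbounded. -/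
theorem uncountable_torsion_wDivisible_stronglyUnbounded
    (H : Type) [AddCommGroup H]
    (htor : ∀ x : H, ∃ n : ℕ, 0 < n ∧ n • x = 0)
    (huncount : Cardinal.aleph0 < Cardinal.mk H)
    (hwdiv : WDivisible H) :
    StronglyUnbounded H := by
  have hH : IsAddTorsion H := fun x => isOfFinAddOrder_iff_nsmul_eq_zero.2 (htor x)
  let ι := (#H).ord.ToType
  have hι : #ι = #H := mk_ord_toType _
  obtain ⟨e⟩ : Nonempty (ι ≃ ι × ℕ) := by
    rw [← Cardinal.eq, mk_prod, lift_id, mk_nat, lift_aleph0, hι,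
      mul_eq_left huncount.le huncount.le aleph0_ne_zero]
  obtain ⟨y, hindep, horder⟩ := exists_iSupIndep_span_singleton huncount
    (fun i => (mk_Iio_lt i (by rw [hι, Ordinal.type_toType])).trans_eq hι)
    (fun _ hE n => exists_lt_addOrderOf_disjoint_span_singleton hH huncount hwdiv hE n)
    fun i => (e i).2
  refine ⟨ι, fun k => AddSubgroup.toIntSubmodule.symm (⨆ i ∈ (fun i => (e i).1) ⁻¹' {k}, ℤ ∙ y i),
    hι, (hindep.iSup_fiber _).map_orderIso _, fun k n hn => ⟨y (e.symm (k, n)), ?_, ?_⟩⟩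
  · exact le_biSup (fun i => ℤ ∙ y i) (by simp) (mem_span_singleton_self _)
  · exact nsmul_ne_zero_of_lt_addOrderOf hn.ne' (by simpa using horder (e.symm (k, n)))
end

section
/- An uncountable abelian group is strongly unbounded if and only if it is w-divisible. -/
open Cardinal

namespace SUWD


universe u

/-- Fiber counting: if every fiber of `f` has cardinality at most `c`,
then `#α ≤ #β * c`. -/
lemma mk_le_mul_of_fibers {α β : Type u} (f : α → β) (c : Cardinal.{u})
    (h : ∀ b : β, #{a : α // f a = b} ≤ c) : #α ≤ #β * c := by
  calc #α = #(Σ b : β, {a : α // f a = b}) :=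
        (Cardinal.mk_congr (Equiv.sigmaFiberEquiv f)).symm
    _ = Cardinal.sum (fun b : β => #{a : α // f a = b}) := Cardinal.mk_sigma _
    _ ≤ Cardinal.sum (fun _ : β => c) := Cardinal.sum_le_sum _ _ h
    _ = #β * c := Cardinal.sum_const' _ _

/-- Cardinality of a generated subgroup. -/
lemma mk_closure_le {G : Type u} [AddCommGroup G] (s : Set G) :
    #(AddSubgroup.closure s) ≤ max ℵ₀ #s := by
  classical
  set t : Set G := s ∪ -s with ht
  have hmem : ∀ x : G, x ∈ AddSubgroup.closure s → x ∈ AddSubmonoid.closure t := by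
    intro x hx
    have : x ∈ (AddSubgroup.closure s).toAddSubmonoid := hx
    rw [AddSubgroup.closure_toAddSubmonoid s] at this
    exact this
  -- surjection from lists over t
  have hsurj : ∀ x : G, x ∈ AddSubgroup.closure s →
      ∃ l : List t, (l.map Subtype.val).sum = x := by
    intro x hx
    obtain ⟨l, hl, hsum⟩ := AddSubmonoid.exists_list_of_mem_closure (hmem x hx)
    refine ⟨l.pmap (fun y hy => (⟨y, hy⟩ : t)) hl, ?_⟩
    rw [List.map_pmap]
    simpa using hsum
  have h1 : #(AddSubgroup.closure s) ≤ #(List t) := by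
    have : ∀ l : List t, (l.map Subtype.val).sum ∈ AddSubgroup.closure s := by
      intro l
      refine AddSubgroup.list_sum_mem _ ?_
      intro x hx
      simp only [List.mem_map] at hx
      obtain ⟨⟨y, hy⟩, _, rfl⟩ := hx
      rcases hy with hy | hy
      · exact AddSubgroup.subset_closure hy
      · have : -y ∈ s := hy
        simpa using neg_mem (AddSubgroup.subset_closure this)
    refine Cardinal.mk_le_of_surjective (f := fun l : List t =>
      (⟨(l.map Subtype.val).sum, this l⟩ : AddSubgroup.closure s)) ?_
    rintro ⟨x, hx⟩
    obtain ⟨l, hl⟩ := hsurj x hx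
    exact ⟨l, Subtype.ext hl⟩
  have h2 : #(List t) ≤ max ℵ₀ #t := Cardinal.mk_list_le_max t
  have h3 : #t ≤ max ℵ₀ #s := by
    have hneg : #(↥(-s)) ≤ #s := by
      refine Cardinal.mk_le_of_injective (f := fun x : ↥(-s) =>
        (⟨-x.1, x.2⟩ : s)) ?_
      intro a b hab
      have := congrArg Subtype.val hab
      simp only at this
      exact Subtype.ext (by simpa using neg_injective this)
    calc #t ≤ #s + #(↥(-s)) := Cardinal.mk_union_le _ _
      _ ≤ #s + #s := by exact add_le_add le_rfl hneg
      _ ≤ max ℵ₀ #s + max ℵ₀ #s := add_le_add (le_max_right _ _) (le_max_right _ _)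
      _ = max ℵ₀ #s := Cardinal.add_eq_self (le_max_left _ _)
  calc #(AddSubgroup.closure s) ≤ max ℵ₀ #t := h1.trans h2
    _ ≤ max ℵ₀ (max ℵ₀ #s) := max_le_max le_rfl h3
    _ = max ℵ₀ #s := by rw [← max_assoc, max_self]

/-- `n`-torsion counting from prime torsion counting. -/
lemma torsion_mk_le {Q : Type u} [AddCommGroup Q] (c : Cardinal.{u}) (hc : ℵ₀ ≤ c)
    (hp : ∀ p : ℕ, p.Prime → #{q : Q // p • q = 0} ≤ c) :
    ∀ n : ℕ, 0 < n → #{q : Q // n • q = 0} ≤ c := by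
  intro n
  induction n using Nat.strong_induction_on with
  | _ n ih =>
    intro hn
    rcases Nat.lt_or_ge n 2 with h2 | h2
    · -- n = 1
      have hn1 : n = 1 := by omega
      subst hn1
      have hsub : ∀ a b : {q : Q // (1 : ℕ) • q = 0}, a = b := by
        rintro ⟨a, ha⟩ ⟨b, hb⟩
        simp only [one_smul] at ha hb
        simp [ha, hb]
      have : #{q : Q // (1 : ℕ) • q = 0} ≤ 1 :=
        Cardinal.mk_le_one_iff_set_subsingleton.mpr (fun a _ b _ => by
          have := hsub ⟨a, by assumption⟩ ⟨b, by assumption⟩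
          exact congrArg Subtype.val this)
      exact le_trans this (le_trans Cardinal.one_le_aleph0 hc)
    · -- n ≥ 2
      have hn2 : 2 ≤ n := h2
      set p := n.minFac with hpdef
      have hprime : p.Prime := Nat.minFac_prime (by omega)
      have hdvd : p ∣ n := Nat.minFac_dvd n
      set m := n / p with hmdef
      have hmp : m * p = n := Nat.div_mul_cancel hdvd
      have hmlt : m < n := Nat.div_lt_self hn hprime.one_lt
      have hm0 : 0 < m := Nat.div_pos (Nat.minFac_le hn) hprime.pos
      -- map to m-torsion with fibers in p-torsion
      set f : {q : Q // n • q = 0} → {q : Q // m • q = 0} :=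
        fun q => ⟨p • q.1, by rw [smul_smul, hmp, q.2]⟩ with hf
      have hfib : ∀ b, #{a : {q : Q // n • q = 0} // f a = b} ≤ c := by
        intro b
        rcases isEmpty_or_nonempty {a : {q : Q // n • q = 0} // f a = b} with he | hne
        · simpa [Cardinal.mk_eq_zero] using (zero_le c)
        · obtain ⟨a₀⟩ := hne
          have key : ∀ a : {a : {q : Q // n • q = 0} // f a = b},
              p • (a.1.1 - a₀.1.1) = 0 := by
            intro a
            have h1 : p • a.1.1 = b.1 := congrArg Subtype.val a.2
            have h2 : p • a₀.1.1 = b.1 := congrArg Subtype.val a₀.2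
            rw [smul_sub, h1, h2, sub_self]
          have : #{a : {q : Q // n • q = 0} // f a = b} ≤ #{q : Q // p • q = 0} := by
            refine Cardinal.mk_le_of_injective (f := fun a =>
              (⟨a.1.1 - a₀.1.1, key a⟩ : {q : Q // p • q = 0})) ?_
            intro a b' hab
            have := congrArg Subtype.val hab
            simp only [sub_left_inj] at this
            exact Subtype.ext (Subtype.ext this)
          exact this.trans (hp p hprime)
      have := mk_le_mul_of_fibers f c hfib
      calc #{q : Q // n • q = 0} ≤ #{q : Q // m • q = 0} * c := this
        _ ≤ c * c := mul_le_mul_left (ih m hmlt hm0) c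
        _ = c := Cardinal.mul_eq_self hc

/-- Core lemma: in an uncountable w-divisible group, below any small subgroup `H`
there is a countable unbounded subgroup disjoint from `H`. -/
lemma exists_unbounded_disjoint {G : Type} [AddCommGroup G]
    (hw : WDivisible G) (huncount : ℵ₀ < #G)
    (H : AddSubgroup G) (hH : #H < #G) :
    ∃ B : AddSubgroup G, #B ≤ ℵ₀ ∧ (∀ n : ℕ, 0 < n → ∃ b ∈ B, n • b ≠ 0) ∧
      Disjoint B H := by
  classical
  by_contra hcon
  push_neg at hcon
  -- Zorn: a maximal subgroup disjoint from H
  obtain ⟨M, hM⟩ := zorn_le₀ {M : AddSubgroup G | Disjoint M H} (by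
    intro c hc hchain
    rcases Set.eq_empty_or_nonempty c with rfl | hne
    · exact ⟨⊥, by simp [Set.mem_setOf_eq], by simp⟩
    · refine ⟨sSup c, ?_, fun z hz => le_sSup hz⟩
      rw [Set.mem_setOf_eq, AddSubgroup.disjoint_def]
      intro x hx hxH
      rw [AddSubgroup.mem_sSup_of_directedOn hne hchain.directedOn] at hx
      obtain ⟨Mi, hMi, hxMi⟩ := hx
      exact (AddSubgroup.disjoint_def.mp (hc hMi)) hxMi hxH)
  have hMdisj : Disjoint M H := hM.1
  -- M is bounded
  have hbound : ∃ n : ℕ, 0 < n ∧ ∀ m ∈ M, n • m = 0 := by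
    by_contra hub
    push_neg at hub
    choose g hgM hgne using fun n : {n : ℕ // 0 < n} => hub n n.2
    set B := AddSubgroup.closure (Set.range g) with hB
    have hBM : B ≤ M := (AddSubgroup.closure_le M).mpr (by
      rintro x ⟨k, rfl⟩; exact hgM k)
    have hBcount : #B ≤ ℵ₀ := le_trans (mk_closure_le _) (by
      have h1 : #(Set.range g) ≤ ℵ₀ :=
        le_trans Cardinal.mk_range_le (Cardinal.mk_le_aleph0)
      exact max_le le_rfl h1)
    have hBub : ∀ n : ℕ, 0 < n → ∃ b ∈ B, n • b ≠ 0 := fun n hn =>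
      ⟨g ⟨n, hn⟩, AddSubgroup.subset_closure ⟨⟨n, hn⟩, rfl⟩, hgne ⟨n, hn⟩⟩
    exact hcon B hBcount hBub (hMdisj.mono_left hBM)
  obtain ⟨n0, hn0pos, hn0⟩ := hbound
  -- the multiplication-by-n0 map factors through G ⧸ M
  set Q := G ⧸ M with hQdef
  set φ : Q →+ G := QuotientAddGroup.lift M (n0 • AddMonoidHom.id G)
      (by intro m hm; simpa using hn0 m hm) with hφ
  have hφmk : ∀ g : G, φ (QuotientAddGroup.mk g) = n0 • g := by
    intro g
    show QuotientAddGroup.lift M (n0 • AddMonoidHom.id G) _ (QuotientAddGroup.mk g) = n0 • g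
    rw [QuotientAddGroup.lift_mk']
    simp
  have hsurj : #(nsmulRange n0 G) ≤ #Q := by
    have hmem : ∀ q : Q, φ q ∈ nsmulRange n0 G := by
      intro q
      refine QuotientAddGroup.induction_on q ?_
      intro g
      exact ⟨g, by simpa using (hφmk g).symm⟩
    refine Cardinal.mk_le_of_surjective
      (f := fun q : Q => (⟨φ q, hmem q⟩ : nsmulRange n0 G)) ?_
    rintro ⟨x, hx⟩
    obtain ⟨g, hg⟩ := hx
    refine ⟨QuotientAddGroup.mk g, Subtype.ext ?_⟩
    simpa using (hφmk g).trans (by simpa using hg)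
  -- essentiality of the image of H in Q
  have hess : ∀ x : Q, x ≠ 0 → ∃ (c : ℤ) (h : G), h ∈ H ∧ c ≠ 0 ∧
      (QuotientAddGroup.mk h : Q) = c • x ∧ (QuotientAddGroup.mk h : Q) ≠ 0 := by
    intro x
    refine QuotientAddGroup.induction_on x ?_
    intro g hx
    have hgM : g ∉ M := fun h => hx ((QuotientAddGroup.eq_zero_iff g).mpr h)
    have hlt : M < M ⊔ AddSubgroup.zmultiples g := by
      refine lt_of_le_of_ne le_sup_left ?_
      intro heq
      have hle : AddSubgroup.zmultiples g ≤ M ⊔ AddSubgroup.zmultiples g := le_sup_right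
      exact hgM (heq ▸ hle (AddSubgroup.mem_zmultiples g))
    have hnd : ¬ Disjoint (M ⊔ AddSubgroup.zmultiples g) H := by
      intro hd
      exact absurd (hM.2 hd hlt.le) hlt.not_ge
    rw [AddSubgroup.disjoint_def] at hnd
    push_neg at hnd
    obtain ⟨h, hhM', hhH, hh0⟩ := hnd
    rw [AddSubgroup.mem_sup] at hhM'
    obtain ⟨m, hm, z, hz, hmz⟩ := hhM'
    obtain ⟨c, hc⟩ := AddSubgroup.mem_zmultiples_iff.mp hz
    have hmkm : (QuotientAddGroup.mk m : Q) = 0 := (QuotientAddGroup.eq_zero_iff m).mpr hm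
    have hkey : (QuotientAddGroup.mk h : Q) = c • (QuotientAddGroup.mk g : Q) := by
      rw [← hmz, ← hc]
      have : (QuotientAddGroup.mk (m + c • g) : Q)
          = QuotientAddGroup.mk m + c • QuotientAddGroup.mk g := by
        simp
      rw [this, hmkm, zero_add]
    have hmkh : (QuotientAddGroup.mk h : Q) ≠ 0 := by
      intro h0
      have : h ∈ M := (QuotientAddGroup.eq_zero_iff h).mp h0
      exact hh0 ((AddSubgroup.disjoint_def.mp hMdisj) this hhH)
    have hc0 : c ≠ 0 := by
      intro rfl0
      apply hmkh
      rw [hkey, rfl0, zero_smul]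
    exact ⟨c, h, hhH, hc0, hkey, hmkh⟩
  -- socle bound
  have hsoc : ∀ p : ℕ, p.Prime → #{q : Q // p • q = 0} ≤ max ℵ₀ #H := by
    intro p hp
    have key : ∀ q : Q, p • q = 0 → q ≠ 0 →
        ∃ h : H, (QuotientAddGroup.mk h.1 : Q) = q := by
      intro q hpq hq
      obtain ⟨c, h, hhH, hc0, hch, hh0⟩ := hess q hq
      have hpz : Prime (p : ℤ) := Nat.prime_iff_prime_int.mp hp
      have hnd : ¬ (p : ℤ) ∣ c := by
        rintro ⟨d, rfl⟩
        apply hh0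
        rw [hch, mul_comm, mul_smul, natCast_zsmul, hpq, smul_zero]
      have hcop : IsCoprime (p : ℤ) c := (hpz.coprime_iff_not_dvd).mpr hnd
      obtain ⟨u, v, huv⟩ := hcop
      refine ⟨⟨v • h, H.zsmul_mem hhH v⟩, ?_⟩
      have h1 : (QuotientAddGroup.mk (v • h) : Q) = v • (QuotientAddGroup.mk h : Q) := by
        simp
      rw [h1, hch, smul_smul]
      have h2 : v * c = 1 - u * p := by linarith [huv]
      rw [h2, sub_smul, one_smul, mul_smul, natCast_zsmul, hpq, smul_zero, sub_zero]
    have key2 : ∀ q : {q : Q // p • q = 0}, ∃ h : H,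
        q.1 = 0 ∨ (QuotientAddGroup.mk h.1 : Q) = q.1 := by
      intro q
      by_cases hq : q.1 = 0
      · exact ⟨0, Or.inl hq⟩
      · obtain ⟨h, hh⟩ := key q.1 q.2 hq
        exact ⟨h, Or.inr hh⟩
    choose r hr using key2
    have hinj : #{q : Q // p • q = 0} ≤ #(Option H) := by
      refine Cardinal.mk_le_of_injective (f := fun q : {q : Q // p • q = 0} =>
        if q.1 = 0 then none else some (r q)) ?_
      intro a b hab
      by_cases ha : a.1 = 0 <;> by_cases hb : b.1 = 0
      · exact Subtype.ext (ha.trans hb.symm)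
      · simp [ha, hb] at hab
      · simp [ha, hb] at hab
      · simp only [if_neg ha, if_neg hb, Option.some_inj] at hab
        have h1 := (hr a).resolve_left ha
        have h2 := (hr b).resolve_left hb
        apply Subtype.ext
        rw [← h1, ← h2, hab]
    refine hinj.trans ?_
    rw [Cardinal.mk_option]
    calc #H + 1 ≤ max ℵ₀ #H + max ℵ₀ #H :=
          add_le_add (le_max_right _ _) (le_trans Cardinal.one_le_aleph0 (le_max_left _ _))
      _ = max ℵ₀ #H := Cardinal.add_eq_self (le_max_left _ _)
  -- integer torsion bound
  have hT : ∀ c : ℤ, c ≠ 0 → #{q : Q // c • q = 0} ≤ max ℵ₀ #H := by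
    intro c hc
    have h1 : #{q : Q // c • q = 0} = #{q : Q // c.natAbs • q = 0} := by
      apply Cardinal.mk_congr
      apply Equiv.subtypeEquivRight
      intro q
      have hn : ((c.natAbs : ℤ)) • q = c.natAbs • q := natCast_zsmul q c.natAbs
      rcases Int.natAbs_eq c with h | h
      · constructor
        · intro h0
          rw [← hn, ← h]
          exact h0
        · intro h0
          rw [h, hn]
          exact h0
      · constructor
        · intro h0
          rw [← neg_eq_zero, ← hn, ← neg_zsmul, ← h]
          exact h0
        · intro h0
          rw [h, neg_zsmul, hn, h0, neg_zero]
    rw [h1]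
    exact torsion_mk_le (max ℵ₀ #H) (le_max_left _ _) hsoc c.natAbs
      (Int.natAbs_pos.mpr hc)
  -- counting Q
  have hQcard : #Q ≤ max ℵ₀ #H := by
    set mH := max ℵ₀ (#H) with hmH
    have hminf : ℵ₀ ≤ mH := le_max_left _ _
    have hex : ∀ x : {x : Q // x ≠ 0}, ∃ ch : ℤ × H, ch.1 ≠ 0 ∧
        (QuotientAddGroup.mk ch.2.1 : Q) = ch.1 • x.1 := by
      intro x
      obtain ⟨c, h, hH', hc, hch, _⟩ := hess x.1 x.2
      exact ⟨(c, ⟨h, hH'⟩), hc, hch⟩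
    choose Ψ hΨ1 hΨ2 using hex
    have hfib : ∀ b : ℤ × H, #{a : {x : Q // x ≠ 0} // Ψ a = b} ≤ mH := by
      intro b
      rcases isEmpty_or_nonempty {a : {x : Q // x ≠ 0} // Ψ a = b} with he | hne
      · simpa [Cardinal.mk_eq_zero] using zero_le mH
      · obtain ⟨a₀⟩ := hne
        have hb1 : b.1 ≠ 0 := by
          have := hΨ1 a₀.1
          rwa [a₀.2] at this
        have key : ∀ a : {a : {x : Q // x ≠ 0} // Ψ a = b},
            b.1 • (a.1.1 - a₀.1.1) = 0 := by
          intro a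
          have h1 : (QuotientAddGroup.mk b.2.1 : Q) = b.1 • a.1.1 := by
            have := hΨ2 a.1; rwa [a.2] at this
          have h2 : (QuotientAddGroup.mk b.2.1 : Q) = b.1 • a₀.1.1 := by
            have := hΨ2 a₀.1; rwa [a₀.2] at this
          rw [smul_sub, ← h1, ← h2, sub_self]
        have hle : #{a : {x : Q // x ≠ 0} // Ψ a = b} ≤ #{q : Q // b.1 • q = 0} := by
          refine Cardinal.mk_le_of_injective (f := fun a =>
            (⟨a.1.1 - a₀.1.1, key a⟩ : {q : Q // b.1 • q = 0})) ?_
          intro a a' h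
          have := congrArg Subtype.val h
          simp only [sub_left_inj] at this
          exact Subtype.ext (Subtype.ext this)
        exact hle.trans (hT b.1 hb1)
    have h1 : #{x : Q // x ≠ 0} ≤ #(ℤ × H) * mH := mk_le_mul_of_fibers Ψ mH hfib
    have h2 : #(ℤ × H) ≤ mH := by
      have : #(ℤ × H) = #ℤ * #H := by
        simpa using Cardinal.mk_prod ℤ H
      rw [this, Cardinal.mk_int]
      calc ℵ₀ * #H ≤ mH * mH := mul_le_mul' (le_max_left _ _) (le_max_right _ _)
        _ = mH := Cardinal.mul_eq_self hminf
    have h3 : #{x : Q // x ≠ 0} ≤ mH := by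
      refine h1.trans ?_
      calc #(ℤ × H) * mH ≤ mH * mH := mul_le_mul_left h2 mH
        _ = mH := Cardinal.mul_eq_self hminf
    have h4 : #{x : Q // ¬ x ≠ 0} ≤ 1 := by
      refine Cardinal.mk_le_one_iff_set_subsingleton.mpr ?_
      intro a ha b hb
      have ha' : a = 0 := not_not.mp ha
      have hb' : b = 0 := not_not.mp hb
      rw [ha', hb']
    have h5 : #Q = #{x : Q // x ≠ 0} + #{x : Q // ¬ x ≠ 0} := by
      exact (Cardinal.mk_sum_compl {x : Q | x ≠ 0}).symm
    rw [h5]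
    calc #{x : Q // x ≠ 0} + #{x : Q // ¬ x ≠ 0} ≤ mH + mH := by
          refine add_le_add h3 (h4.trans ?_)
          exact le_trans Cardinal.one_le_aleph0 hminf
      _ = mH := Cardinal.add_eq_self hminf
  have hfinal : #G ≤ max ℵ₀ #H := by
    calc #G = #(nsmulRange n0 G) := (hw n0 hn0pos).symm
      _ ≤ #Q := hsurj
      _ ≤ max ℵ₀ #H := hQcard
  exact absurd hfinal (not_le.mpr (max_lt huncount hH))


end SUWD

/-- An uncountable abelian group is strongly unbounded if and only if it is `w`-divisible. -/
theorem stronglyUnbounded_iff_wDivisible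
    (G : Type) [AddCommGroup G] (huncount : Cardinal.aleph0 < Cardinal.mk G) :
    StronglyUnbounded G ↔ WDivisible G := by
  constructor
  · rintro ⟨I, A, hcard, hind, hub⟩ n hn
    refine le_antisymm
      (Cardinal.mk_le_of_injective (f := (Subtype.val : nsmulRange n G → G))
        Subtype.val_injective) ?_
    rw [← hcard]
    choose a haA hane using fun i => hub i n hn
    have hmem : ∀ i, n • a i ∈ nsmulRange n G := fun i => ⟨a i, by simp⟩
    refine Cardinal.mk_le_of_injective
      (f := fun i => (⟨n • a i, hmem i⟩ : nsmulRange n G)) ?_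
    intro i j hij
    by_contra hne
    have hx : n • a i ∈ A i := nsmul_mem (haA i) n
    have hx2 : n • a i ∈ A j := by
      have h := congrArg Subtype.val hij
      simp only at h
      rw [h]
      exact nsmul_mem (haA j) n
    have hdisj := hind.pairwiseDisjoint hne
    exact hane i ((AddSubgroup.disjoint_def.mp hdisj) hx hx2)
  · intro hw
    classical
    set 𝒮 : Set (Set (AddSubgroup G)) :=
      {S | sSupIndep S ∧ ∀ A ∈ S, #A ≤ ℵ₀ ∧ ∀ n : ℕ, 0 < n → ∃ a ∈ A, n • a ≠ 0}
      with h𝒮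
    have hchain : ∀ c ⊆ 𝒮, IsChain (· ⊆ ·) c → ∃ ub ∈ 𝒮, ∀ s ∈ c, s ⊆ ub := by
      intro c hc hch
      refine ⟨⋃₀ c, ⟨?_, ?_⟩, fun s hs => Set.subset_sUnion_of_mem hs⟩
      · -- independence of the union of a chain
        intro a ha
        rw [AddSubgroup.disjoint_def]
        intro x hxa hxs
        obtain ⟨s₀, hs₀c, has₀⟩ := ha
        have hrw : ⋃₀ c \ {a} = ⋃ i : c, ((i : Set (AddSubgroup G)) \ {a}) := by
          rw [Set.sUnion_eq_iUnion, Set.iUnion_diff]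
        rw [hrw] at hxs
        have hne : Nonempty c := ⟨⟨s₀, hs₀c⟩⟩
        have hdir : Directed (· ≤ ·)
            (fun i : c => sSup ((i : Set (AddSubgroup G)) \ {a})) := by
          intro i j
          rcases hch.total i.2 j.2 with h | h
          · exact ⟨j, sSup_le_sSup (Set.diff_subset_diff_left h), le_rfl⟩
          · exact ⟨i, le_rfl, sSup_le_sSup (Set.diff_subset_diff_left h)⟩
        rw [sSup_iUnion] at hxs
        obtain ⟨i, hxi⟩ := (AddSubgroup.mem_iSup_of_directed hdir).mp hxs
        rcases hch.total i.2 hs₀c with h | h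
        · -- i ⊆ s₀
          have : x ∈ sSup ((s₀ : Set (AddSubgroup G)) \ {a}) :=
            sSup_le_sSup (Set.diff_subset_diff_left h) hxi
          exact (AddSubgroup.disjoint_def.mp ((hc hs₀c).1 has₀)) hxa this
        · -- s₀ ⊆ i
          have hai : a ∈ (i : Set (AddSubgroup G)) := h has₀
          exact (AddSubgroup.disjoint_def.mp ((hc i.2).1 hai)) hxa hxi
      · intro A hA
        obtain ⟨s, hsc, hAs⟩ := hA
        exact (hc hsc).2 A hAs
    obtain ⟨S, hSmax⟩ := zorn_subset 𝒮 hchain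
    have hS : S ∈ 𝒮 := hSmax.1
    -- the chosen family has at most #G members
    have hSle : #S ≤ #G := by
      choose a haA ha1 using fun A : ↥S => (hS.2 A.1 A.2).2 1 one_pos
      have ha0 : ∀ A, a A ≠ 0 := fun A h => ha1 A (by rw [h, smul_zero])
      refine Cardinal.mk_le_of_injective (f := a) ?_
      intro A A' h
      by_contra hne
      have hAA' : A.1 ≠ A'.1 := fun hh => hne (Subtype.ext hh)
      have hdisj : Disjoint A.1 A'.1 := by
        refine (hS.1 A.2).mono_right ?_
        refine le_sSup ?_
        exact ⟨A'.2, by simp [hAA'.symm]⟩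
      have hmem' : a A ∈ A'.1 := by rw [h]; exact haA A'
      exact ha0 A ((AddSubgroup.disjoint_def.mp hdisj) (haA A) hmem')
    -- it cannot have fewer than #G members
    have hSnotlt : ¬ (#S < #G) := by
      intro hlt
      set H : AddSubgroup G := sSup S with hH
      have hHcard : #H < #G := by
        have hHle : (H : Set G) ⊆
            (AddSubgroup.closure (⋃ A ∈ S, (A : Set G)) : Set G) := by
          refine (sSup_le ?_ : H ≤ AddSubgroup.closure (⋃ A ∈ S, (A : Set G)))
          intro A hA x hx
          exact AddSubgroup.subset_closure (Set.mem_biUnion hA hx)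
        have h1 : #H ≤ max ℵ₀ #(⋃ A ∈ S, (A : Set G)) :=
          le_trans (Cardinal.mk_le_mk_of_subset hHle) (SUWD.mk_closure_le _)
        have h2 : #(⋃ A ∈ S, (A : Set G)) ≤ #S * ℵ₀ := by
          refine le_trans (Cardinal.mk_biUnion_le _ _) ?_
          refine mul_le_mul_right ?_ _
          rcases isEmpty_or_nonempty ↥S with hSe | hSne
          · simp
          · exact ciSup_le' (fun x => (hS.2 x.1 x.2).1)
        have h3 : #S * ℵ₀ < #G :=
          lt_of_le_of_lt (Cardinal.mul_le_max _ _)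
            (max_lt (max_lt hlt huncount) huncount)
        exact lt_of_le_of_lt h1 (max_lt huncount (lt_of_le_of_lt h2 h3))
      obtain ⟨B, hBc, hBu, hBd⟩ :=
        SUWD.exists_unbounded_disjoint hw huncount H hHcard
      have hBne : B ∉ S := by
        intro hBS
        obtain ⟨b, hbB, hb1⟩ := hBu 1 one_pos
        have hbH : b ∈ H := by
          have hle : B ≤ H := le_sSup hBS
          exact hle hbB
        have hb0 : b = 0 := (AddSubgroup.disjoint_def.mp hBd) hbB hbH
        exact hb1 (by rw [hb0, smul_zero])
      have hins : insert B S ∈ 𝒮 := by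
        constructor
        · -- independence
          intro a ha
          rcases Set.mem_insert_iff.mp ha with rfl | haS
          · rw [Set.insert_diff_self_of_notMem hBne]
            exact hBd
          · have hne : a ≠ B := fun h => hBne (h ▸ haS)
            have hset : insert B S \ {a} = insert B (S \ {a}) :=
              Set.insert_diff_of_notMem S (by simp [hne.symm])
            rw [hset, sSup_insert, AddSubgroup.disjoint_def]
            intro x hxa hxBs
            rw [AddSubgroup.mem_sup] at hxBs
            obtain ⟨b, hb, k, hk, hbk⟩ := hxBs
            have hkH : k ∈ H := by
              have hle : sSup (S \ {a}) ≤ H := sSup_le_sSup Set.diff_subset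
              exact hle hk
            have hxH : x ∈ H := by
              have hle : a ≤ H := le_sSup haS
              exact hle hxa
            have hbH : b ∈ H := by
              have hbeq : b = x - k := by rw [← hbk]; abel
              rw [hbeq]
              exact sub_mem hxH hkH
            have hb0 : b = 0 := (AddSubgroup.disjoint_def.mp hBd) hb hbH
            have hxk : x = k := by rw [← hbk, hb0, zero_add]
            exact (AddSubgroup.disjoint_def.mp (hS.1 haS)) hxa (hxk ▸ hk)
        · intro A hA
          rcases Set.mem_insert_iff.mp hA with rfl | hAS
          · exact ⟨hBc, hBu⟩
          · exact hS.2 A hAS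
      have hsub : insert B S ⊆ S := hSmax.2 hins (Set.subset_insert B S)
      exact hBne (hsub (Set.mem_insert B S))
    have hScard : #S = #G := le_antisymm hSle (not_lt.mp hSnotlt)
    refine ⟨↥S, fun A => A.1, hScard, ?_, ?_⟩
    · exact (sSupIndep_iff S).mp hS.1
    · intro i n hn
      exact (hS.2 i.1 i.2).2 n hn
end

section
/- Let G be an abelian group with torsion subgroup H = t(G). If r_0(G)·ℵ₀ < |G| (i.e., the free rank of G is strictly less than |G| and G is uncountable) and G is w-divisible, then H is w-divisible and |H| = |G|. -/
open Cardinal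
open AddCommGroup (torsion)

universe u

lemma mem_nsmulRange {G : Type} [AddCommGroup G] {n : ℕ} {x : G} :
    x ∈ nsmulRange n G ↔ ∃ g : G, n • g = x := by
  simp [nsmulRange, AddMonoidHom.mem_range]

lemma mk_le_mk_mul_mk_of_sub_mem {K β : Type u} [AddGroup K] (H : AddSubgroup K) (f : K → β)
    (hf : ∀ x y, f x = f y → x - y ∈ H) : #K ≤ #β * #H := by
  refine mk_le_mk_mul_of_mk_preimage_le f fun b => ?_
  rcases (f ⁻¹' {b}).eq_empty_or_nonempty with hb | ⟨y, hy⟩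
  · simp [hb]
  · refine mk_le_of_injective
      (f := fun x : f ⁻¹' {b} => (⟨x - y, hf x y (x.2.trans hy.symm)⟩ : H)) fun x x' hxx' =>
        Subtype.ext (sub_left_inj.mp (congrArg Subtype.val hxx'))

lemma Submodule.mk_span_int_le {K : Type*} [AddCommGroup K] (s : Set K) :
    #(Submodule.span ℤ s) ≤ max #s ℵ₀ := by
  have hle :=
    mk_le_of_surjective (Finsupp.linearCombination ℤ ((↑) : s → K)).surjective_rangeRestrict
  rw [Finsupp.range_linearCombination, Subtype.range_coe] at hle
  refine hle.trans ?_
  rcases isEmpty_or_nonempty s with hs | hs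
  · exact mk_le_aleph0.trans (le_max_right _ _)
  · rw [mk_finsupp_lift_of_infinite', mk_int, lift_uzero, lift_aleph0]

lemma mk_le_max_rank_aleph0_mul_mk_torsion (K : Type u) [AddCommGroup K] :
    #K ≤ max (Module.rank ℤ K) ℵ₀ * #(torsion K) := by
  obtain ⟨I, hI, hmax⟩ := exists_maximal_linearIndepOn ℤ (id : K → K)
  have hmul : ∀ x : K, ∃ a : ℤ, a ≠ 0 ∧ a • x ∈ Submodule.span ℤ I := by
    intro x
    by_cases hx : x ∈ I
    · exact ⟨1, one_ne_zero, by simpa using Submodule.subset_span hx⟩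
    · simpa using hmax x hx
  choose a ha hmem using hmul
  have hfib : ∀ x y,
      (a x, (⟨a x • x, hmem x⟩ : Submodule.span ℤ I)) = (a y, ⟨a y • y, hmem y⟩) →
      x - y ∈ torsion K := by
    intro x y hxy
    simp only [Prod.mk.injEq, Subtype.mk.injEq] at hxy
    obtain ⟨haxy, hxy⟩ := hxy
    rw [← haxy] at hxy
    exact isOfFinAddOrder_iff_zsmul_eq_zero.2 ⟨a x, ha x, by rw [smul_sub, hxy, sub_self]⟩
  have hspan : #(ℤ × Submodule.span ℤ I) ≤ max (Module.rank ℤ K) ℵ₀ := by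
    rw [mk_prod, mk_int, lift_aleph0, lift_uzero]
    refine mul_le_of_le (le_max_right _ _) (le_max_right _ _) ?_
    exact (Submodule.mk_span_int_le I).trans
      (max_le_max_right _ (by simpa using hI.cardinal_le_rank))
  calc #K ≤ #(ℤ × Submodule.span ℤ I) * #(torsion K) :=
        mk_le_mk_mul_mk_of_sub_mem _ _ hfib
    _ ≤ _ := by gcongr

lemma mk_torsion_eq_of_rank_mul_aleph0_lt {K : Type u} [AddCommGroup K]
    (h : Module.rank ℤ K * ℵ₀ < #K) : #(torsion K) = #K := by
  rcases eq_or_ne (Module.rank ℤ K) 0 with hr | hr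
  · have htors : IsAddTorsion K := fun x => by
      obtain ⟨c, hc, hcx⟩ := rank_eq_zero_iff.mp hr x
      exact isOfFinAddOrder_iff_zsmul_eq_zero.2 ⟨c, hc, hcx⟩
    exact mk_congr htors.torsionAddEquiv.toEquiv
  · have haleph0 : ℵ₀ < #K := (le_mul_left hr).trans_lt h
    refine (mk_le_of_injective Subtype.val_injective).antisymm (not_lt.mp fun hlt => ?_)
    have hmax : max (Module.rank ℤ K) ℵ₀ < #K :=
      max_lt ((le_mul_right aleph0_ne_zero).trans_lt h) haleph0
    exact (mk_le_max_rank_aleph0_mul_mk_torsion K).not_gt (mul_lt_of_lt haleph0.le hmax hlt)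

lemma AddSubgroup.rank_int_le {K : Type*} [AddCommGroup K] (H : AddSubgroup K) :
    Module.rank ℤ H ≤ Module.rank ℤ K :=
  LinearMap.rank_le_of_injective H.subtype.toIntLinearMap Subtype.val_injective

-- Inside `G` both are `{n • g | g ∈ t(G)}`: for `n ≠ 0`, `n • g` is torsion only if `g` is.
lemma mk_nsmulRange_torsion {G : Type} [AddCommGroup G] {n : ℕ} (hn : n ≠ 0) :
    #(nsmulRange n (torsion G)) = #(torsion (nsmulRange n G)) := by
  have hrange : Set.range (Subtype.val ∘ Subtype.val : nsmulRange n (torsion G) → G) =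
      Set.range (Subtype.val ∘ Subtype.val : torsion (nsmulRange n G) → G) := by
    ext x
    simp only [Set.mem_range, Function.comp_apply, Subtype.exists, mem_nsmulRange,
      AddCommGroup.mem_torsion, AddSubmonoid.isOfFinAddOrder_coe.symm, Subtype.ext_iff,
      AddSubgroup.coe_nsmul, exists_prop]
    constructor
    · rintro ⟨_, hx, ⟨g, -, rfl⟩, rfl⟩
      exact ⟨_, ⟨g, rfl⟩, hx, rfl⟩
    · rintro ⟨_, ⟨g, rfl⟩, hx, rfl⟩
      exact ⟨_, hx, ⟨g, (isOfFinAddOrder_nsmul.mp hx).resolve_right hn, rfl⟩, rfl⟩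
  rw [← mk_range_eq _ (Subtype.val_injective.comp Subtype.val_injective), hrange,
    mk_range_eq _ (Subtype.val_injective.comp Subtype.val_injective)]

/-- If the free rank of `G` satisfies `r₀(G)·ℵ₀ < |G|` and `G` is `w`-divisible, then the
torsion subgroup `H = t(G)` is `w`-divisible and `|H| = |G|`. -/
theorem torsion_wDivisible_of_small_free_rank
    (G : Type) [AddCommGroup G]
    (hrank : Module.rank ℤ G * Cardinal.aleph0 < Cardinal.mk G)
    (hwdiv : WDivisible G) :
    WDivisible ↥(AddCommGroup.torsion G) ∧
      Cardinal.mk ↥(AddCommGroup.torsion G) = Cardinal.mk G := by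
  have htorsion : #(torsion G) = #G := mk_torsion_eq_of_rank_mul_aleph0_lt hrank
  refine ⟨fun n hn => ?_, htorsion⟩
  have hnG : #(nsmulRange n G) = #G := hwdiv n hn
  have hrank_nG : Module.rank ℤ (nsmulRange n G) * ℵ₀ < #(nsmulRange n G) :=
    hnG ▸ (mul_le_mul_left (nsmulRange n G).rank_int_le _).trans_lt hrank
  calc #(nsmulRange n (torsion G))
      = #(torsion (nsmulRange n G)) := mk_nsmulRange_torsion hn.ne'
    _ = #(nsmulRange n G) := mk_torsion_eq_of_rank_mul_aleph0_lt hrank_nG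
    _ = #(torsion G) := hnG.trans htorsion.symm
end

section
/- Every abelian group G admits a decomposition G = K ⊕ M where K is a bounded torsion group (of finite exponent) and M is a w-divisible group. -/
/-!
Choose `d > 0` making `|dG| = κ` minimal. If `κ` is finite, `G` itself is bounded. Otherwise let
`V` be maximal among the `d`-bounded pure subgroups of `G`. By Kulikov's theorem a bounded pure
subgroup is a direct summand, so `G = V ⊕ M`, and `dG = dM`. If `|M| > κ`, then `M[p] ⊄ dM` for
some prime `p` (otherwise every `M[n]`, hence `M`, has size at most `κ`); an element of `M[p] \ dM`
of height `h` is `p ^ h • y` with `⟨y⟩` pure, and `V ⊕ ⟨y⟩` contradicts the maximality of `V`.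
Hence `|M| ≤ κ ≤ |ndG| ≤ |nM|` for every `n > 0`.
-/

open Cardinal
open scoped Pointwise

namespace AddSubgroup

variable {G : Type*} [AddCommGroup G]

lemma pointwise_nsmul_le_of_dvd {m n : ℕ} (h : m ∣ n) (S : AddSubgroup G) : n • S ≤ m • S := by
  obtain ⟨r, rfl⟩ := h
  rintro _ ⟨s, hs, rfl⟩
  exact ⟨r • s, nsmul_mem hs r, by simp [mul_smul]⟩

lemma pointwise_nsmul_le_self (n : ℕ) (S : AddSubgroup G) : n • S ≤ S := by
  simpa using pointwise_nsmul_le_of_dvd (one_dvd n) S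

lemma pointwise_nsmul_mono (n : ℕ) {S T : AddSubgroup G} (h : S ≤ T) : n • S ≤ n • T :=
  map_mono h

lemma pointwise_nsmul_sup (n : ℕ) (S T : AddSubgroup G) : n • (S ⊔ T) = n • S ⊔ n • T :=
  map_sup S T _

lemma pointwise_nsmul_eq_bot_iff {n : ℕ} {S : AddSubgroup G} :
    n • S = ⊥ ↔ ∀ x ∈ S, n • x = 0 :=
  map_eq_bot_iff S

/-- `V` is pure in `H`: `V ∩ nH = nV` for all `n`. The inclusion `V ≤ H` is not part of it. -/
def IsPure (V H : AddSubgroup G) : Prop :=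
  ∀ n : ℕ, V ⊓ n • H ≤ n • V

lemma IsPure.pointwise_nsmul {V H : AddSubgroup G} (h : V.IsPure H) (p : ℕ) :
    (p • V).IsPure (p • H) := by
  intro n x ⟨hxV, hxH⟩
  rw [← mul_smul] at hxH ⊢
  exact h (n * p) ⟨pointwise_nsmul_le_self p V hxV, hxH⟩

lemma IsPure.sup {V W M H : AddSubgroup G} (hV : V.IsPure H) (hVM : Disjoint V M)
    (hsum : V ⊔ M = H) (hWM : W ≤ M) (hW : W.IsPure M) : (V ⊔ W).IsPure H := by
  intro n x ⟨hx, hxH⟩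
  obtain ⟨v, hv, w, hw, rfl⟩ := mem_sup.1 hx
  obtain ⟨g, hg, hgx⟩ := (mem_smul_pointwise_iff_exists _ _ _).1 hxH
  rw [← hsum] at hg
  obtain ⟨gv, hgv, gm, hgm, rfl⟩ := mem_sup.1 hg
  have hdiff : v - n • gv = n • gm - w := by
    rw [sub_eq_sub_iff_add_eq_add, ← smul_add, add_comm gm, hgx]
  have hzero : v - n • gv = 0 := disjoint_def.1 hVM (sub_mem hv (nsmul_mem hgv n))
    (hdiff ▸ sub_mem (nsmul_mem hgm n) (hWM hw))
  have hv' : v ∈ n • V :=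
    hV n ⟨hv, (mem_smul_pointwise_iff_exists _ _ _).2
      ⟨gv, hsum ▸ mem_sup_left hgv, (sub_eq_zero.1 hzero).symm⟩⟩
  have hw' : w ∈ n • W := hW n ⟨hw, (mem_smul_pointwise_iff_exists _ _ _).2
    ⟨gm, hgm, by rw [← sub_eq_zero, ← hdiff, hzero]⟩⟩
  exact add_mem (pointwise_nsmul_mono n le_sup_left hv') (pointwise_nsmul_mono n le_sup_right hw')

lemma mem_of_nsmul_mem_of_zsmul_mem {p : ℕ} (hp : p.Prime) {k : ℤ} (hk : ¬ (p : ℤ) ∣ k)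
    {S : AddSubgroup G} {x : G} (hpx : p • x ∈ S) (hkx : k • x ∈ S) : x ∈ S := by
  obtain ⟨α, β, hαβ⟩ := (Nat.prime_iff_prime_int.mp hp).irreducible.coprime_iff_not_dvd.2 hk
  have hx : x = α • ((p : ℤ) • x) + β • (k • x) := by
    rw [smul_smul, smul_smul, ← add_smul, hαβ, one_smul]
  rw [hx, natCast_zsmul]
  exact add_mem (zsmul_mem hpx α) (zsmul_mem hkx β)

lemma exists_disjoint_sup_eq_of_disjoint_nsmul {p : ℕ} (hp : p.Prime) {V H : AddSubgroup G}
    (hVH : V ≤ H) (hdisj : Disjoint V (p • H)) : ∃ M, Disjoint V M ∧ V ⊔ M = H := by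
  obtain ⟨T, -, hT⟩ := zorn_le_nonempty₀ {T | p • H ≤ T ∧ T ≤ H ∧ Disjoint V T}
    (fun c hcs hc T₀ hT₀ => by
      refine ⟨sSup c, ⟨(hcs hT₀).1.trans (le_sSup hT₀), sSup_le fun T hT => (hcs hT).2.1,
        disjoint_def.2 fun hxV hxc => ?_⟩, fun _ => le_sSup⟩
      obtain ⟨T, hTc, hxT⟩ := (mem_sSup_of_directedOn ⟨T₀, hT₀⟩ hc.directedOn).1 hxc
      exact disjoint_def.1 (hcs hTc).2.2 hxV hxT)
    (p • H) ⟨le_rfl, pointwise_nsmul_le_self p H, hdisj⟩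
  obtain ⟨hpT, hTH, hVT⟩ := hT.prop
  refine ⟨T, hVT, le_antisymm (sup_le hVH hTH) fun h hh => ?_⟩
  by_contra hnot
  -- An element `v = t + k • h` of `V` forces `p ∣ k`, since otherwise `h ∈ V ⊔ T`.
  have hdisj' : Disjoint V (T ⊔ zmultiples h) := by
    refine disjoint_def.2 fun {v} hv hvT => ?_
    obtain ⟨t, ht, _, hk, rfl⟩ := mem_sup.1 hvT
    obtain ⟨k, rfl⟩ := mem_zmultiples_iff.1 hk
    by_cases hpk : (p : ℤ) ∣ k
    · obtain ⟨k', rfl⟩ := hpk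
      have hkT : ((p : ℤ) * k') • h ∈ T := by
        rw [mul_comm, mul_smul, natCast_zsmul]
        exact zsmul_mem (hpT (smul_mem_pointwise_smul h p H hh)) k'
      exact disjoint_def.1 hVT hv (add_mem ht hkT)
    · refine absurd (mem_of_nsmul_mem_of_zsmul_mem hp hpk
        (mem_sup_right (hpT (smul_mem_pointwise_smul h p H hh))) ?_) hnot
      rw [← add_sub_cancel_left t (k • h)]
      exact sub_mem (mem_sup_left hv) (mem_sup_right ht)
  have hle := hT.le_of_ge ⟨hpT.trans le_sup_left, sup_le hTH (zmultiples_le.2 hh), hdisj'⟩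
    le_sup_left
  exact hnot (mem_sup_right (hle (mem_sup_right (mem_zmultiples h))))

/-- A complement `C` of `p • V` in `p • H` lifts: in `L = {h ∈ H | p • h ∈ C}` the subgroup `V ⊓ L`
meets `p • L` trivially, and its complement in `L` is a complement of `V` in `H`. -/
lemma exists_disjoint_sup_eq_of_nsmul {p : ℕ} (hp : p.Prime) {V H C : AddSubgroup G}
    (hVH : V ≤ H) (hpure : V ⊓ p • H ≤ p • V) (hC : Disjoint (p • V) C)
    (hsum : p • V ⊔ C = p • H) : ∃ M, Disjoint V M ∧ V ⊔ M = H := by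
  set L := H ⊓ C.comap (DistribSMul.toAddMonoidHom G p)
  have hS : Disjoint (V ⊓ L) (p • L) := by
    refine disjoint_def.2 fun {x} hx hxL => ?_
    obtain ⟨l, hl, rfl⟩ := (mem_smul_pointwise_iff_exists _ _ _).1 hxL
    exact disjoint_def.1 hC (hpure ⟨hx.1, smul_mem_pointwise_smul l p H hl.1⟩) hl.2
  obtain ⟨M, hSM, hSML⟩ := exists_disjoint_sup_eq_of_disjoint_nsmul hp inf_le_right hS
  have hML : M ≤ L := hSML ▸ le_sup_right
  refine ⟨M, disjoint_def.2 fun {x} hxV hxM => disjoint_def.1 hSM ⟨hxV, hML hxM⟩ hxM,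
    le_antisymm (sup_le hVH (hML.trans inf_le_left)) fun h hh => ?_⟩
  obtain ⟨pv, hpv, c, hc, hpvc⟩ := mem_sup.1 (hsum ▸ smul_mem_pointwise_smul h p H hh)
  obtain ⟨v, hv, rfl⟩ := (mem_smul_pointwise_iff_exists _ _ _).1 hpv
  have hhv : h - v ∈ L := by
    refine mem_inf.2 ⟨sub_mem hh (hVH hv), ?_⟩
    change p • (h - v) ∈ C
    rwa [smul_sub, ← hpvc, add_sub_cancel_left]
  have hhvM : h - v ∈ V ⊔ M := sup_le_sup_right inf_le_left M (hSML ▸ hhv)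
  simpa using add_mem (mem_sup_left hv) hhvM

theorem exists_disjoint_sup_eq_of_isPure {d : ℕ} (hd : 0 < d) {V H : AddSubgroup G}
    (hVH : V ≤ H) (hpure : V.IsPure H) (hbdd : ∀ x ∈ V, d • x = 0) :
    ∃ M, Disjoint V M ∧ V ⊔ M = H := by
  induction d using Nat.strong_induction_on generalizing V H with
  | _ d ih =>
  rcases eq_or_ne d 1 with rfl | hd1
  · exact ⟨H, disjoint_def.2 fun hxV _ => by simpa using hbdd _ hxV, sup_eq_right.2 hVH⟩
  obtain ⟨p, e, hp, rfl⟩ : ∃ p e, p.Prime ∧ d = p * e :=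
    ⟨d.minFac, d / d.minFac, Nat.minFac_prime hd1, (Nat.mul_div_cancel' d.minFac_dvd).symm⟩
  have he : 0 < e := Nat.pos_of_mul_pos_left hd
  have hbdd' : ∀ x ∈ p • V, e • x = 0 := by
    intro x hx
    obtain ⟨v, hv, rfl⟩ := (mem_smul_pointwise_iff_exists _ _ _).1 hx
    rw [smul_smul, mul_comm]
    exact hbdd v hv
  obtain ⟨C, hC, hsum⟩ := ih e (lt_mul_left he hp.one_lt) he (pointwise_nsmul_mono p hVH)
    (hpure.pointwise_nsmul p) hbdd'
  exact exists_disjoint_sup_eq_of_nsmul hp hVH (hpure p) hC hsum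

/-- Inductively `k = p ^ c * k'`; if `p ∤ k'`, then `k' • p ^ h • y = p ^ (h - c) • k • y` would put
`p ^ h • y` in `p ^ (h + 1) • M`. -/
lemma pow_dvd_of_zsmul_mem_pow_nsmul {p h c : ℕ} (hp : p.Prime) {M : AddSubgroup G} {y : G}
    (hord : p ^ (h + 1) • y = 0) (hx : p ^ h • y ∉ p ^ (h + 1) • M) (hc : c ≤ h + 1) {k : ℤ}
    (hk : k • y ∈ p ^ c • M) : (p : ℤ) ^ c ∣ k := by
  induction c generalizing k with
  | zero => simp
  | succ c ih =>
    obtain ⟨k', rfl⟩ := ih (by omega) (pointwise_nsmul_le_of_dvd (pow_dvd_pow p c.le_succ) M hk)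
    rw [pow_succ]
    refine mul_dvd_mul_left _ (not_not.1 fun hpk => hx ?_)
    refine mem_of_nsmul_mem_of_zsmul_mem hp hpk (k := k') ?_ ?_
    · rw [smul_smul, ← pow_succ', hord]
      exact zero_mem _
    · have hk' : k' • p ^ h • y = p ^ (h - c) • ((p : ℤ) ^ c * k') • y := by
        rw [← natCast_zsmul _ (p ^ h), ← natCast_zsmul _ (p ^ (h - c)), smul_smul, smul_smul]
        congr 1
        push_cast
        rw [← mul_assoc, ← pow_add, Nat.sub_add_cancel (by omega), mul_comm]
      rw [hk', show h + 1 = h - c + (c + 1) by omega, pow_add, mul_smul]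
      exact smul_mem_pointwise_smul _ _ _ hk

lemma isPure_zmultiples {p h : ℕ} (hp : p.Prime) {M : AddSubgroup G} {y : G}
    (hord : p ^ (h + 1) • y = 0) (hx : p ^ h • y ∉ p ^ (h + 1) • M) :
    (zmultiples y).IsPure M := by
  intro n z ⟨hz, hzn⟩
  obtain ⟨k, rfl⟩ := mem_zmultiples_iff.1 hz
  obtain ⟨c, hc, hgcd⟩ := (Nat.dvd_prime_pow hp).1 (Nat.gcd_dvd_right n (p ^ (h + 1)))
  obtain ⟨q, rfl⟩ := pow_dvd_of_zsmul_mem_pow_nsmul hp hord hx hc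
    (pointwise_nsmul_le_of_dvd (hgcd ▸ Nat.gcd_dvd_left n _) M hzn)
  -- Bézout for `gcd n (p ^ (h + 1)) = p ^ c` writes `(p ^ c * q) • y` as `n •` a multiple of `y`.
  have hbez := Nat.gcd_eq_gcd_ab n (p ^ (h + 1))
  rw [hgcd] at hbez
  refine (mem_smul_pointwise_iff_exists _ _ _).2
    ⟨(n.gcdA (p ^ (h + 1)) * q) • y, zsmul_mem (mem_zmultiples y) _, ?_⟩
  have hcoef : (p : ℤ) ^ c * q
      = n * (n.gcdA (p ^ (h + 1)) * q) + n.gcdB (p ^ (h + 1)) * q * ((p ^ (h + 1) : ℕ) : ℤ) := by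
    push_cast at hbez ⊢
    linear_combination q * hbez
  rw [hcoef, add_smul, mul_smul _ ((p ^ (h + 1) : ℕ) : ℤ), natCast_zsmul, hord, smul_zero,
    add_zero, mul_smul (n : ℤ), natCast_zsmul]

lemma exists_mem_pow_nsmul_notMem_succ {p a : ℕ} {M : AddSubgroup G} {x : G} (hxM : x ∈ M)
    (hx : x ∉ p ^ a • M) : ∃ h < a, x ∈ p ^ h • M ∧ x ∉ p ^ (h + 1) • M := by
  induction a with
  | zero => simp_all
  | succ a ih =>
    by_cases hxa : x ∈ p ^ a • M
    · exact ⟨a, a.lt_succ_self, hxa, hx⟩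
    · obtain ⟨h, hlt, hh⟩ := ih hxa
      exact ⟨h, by omega, hh⟩

lemma mem_pointwise_nsmul_of_mem_ordProj {p d : ℕ} (hp : p.Prime) (hd : 0 < d)
    {M : AddSubgroup G} {x : G} (hpx : p • x = 0) (hx : x ∈ p ^ d.factorization p • M) :
    x ∈ d • M := by
  obtain ⟨α, β, hαβ⟩ := (Nat.coprime_ordCompl hp hd.ne').isCoprime
  have hx' : (d / p ^ d.factorization p) • β • x = x := by
    have := congrArg (· • x) hαβ
    simp only [add_smul, mul_smul, natCast_zsmul, hpx, smul_zero, zero_add, one_smul] at this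
    rwa [smul_comm] at this
  have hd' : d • M = (d / p ^ d.factorization p) • p ^ d.factorization p • M := by
    rw [← mul_smul, mul_comm, Nat.ordProj_mul_ordCompl_eq_self]
  rw [← hx', hd']
  exact smul_mem_pointwise_smul _ _ _ (zsmul_mem hx β)

lemma exists_isPure_of_notMem_pointwise_nsmul {p d : ℕ} (hp : p.Prime) (hd : 0 < d)
    {M : AddSubgroup G} {x : G} (hxM : x ∈ M) (hpx : p • x = 0) (hx : x ∉ d • M) :
    ∃ W ≤ M, W ≠ ⊥ ∧ W.IsPure M ∧ ∀ w ∈ W, d • w = 0 := by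
  obtain ⟨h, hlt, hxh, hxh'⟩ := exists_mem_pow_nsmul_notMem_succ hxM
    (mt (mem_pointwise_nsmul_of_mem_ordProj hp hd hpx) hx)
  obtain ⟨y, hy, rfl⟩ := (mem_smul_pointwise_iff_exists _ _ _).1 hxh
  have hord : p ^ (h + 1) • y = 0 := by rw [pow_succ', mul_smul, hpx]
  refine ⟨zmultiples y, zmultiples_le.2 hy, fun hbot => hx ?_, isPure_zmultiples hp hord hxh',
    fun w hw => ?_⟩
  · have hxy : p ^ h • y ∈ zmultiples y := nsmul_mem (mem_zmultiples y) _
    rw [hbot, mem_bot] at hxy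
    exact hxy ▸ zero_mem _
  · obtain ⟨k, rfl⟩ := mem_zmultiples_iff.1 hw
    obtain ⟨r, hr⟩ : p ^ (h + 1) ∣ d := (pow_dvd_pow p hlt).trans (Nat.ordProj_dvd d p)
    rw [smul_comm, hr, mul_comm, mul_smul, hord, smul_zero, zsmul_zero]

lemma mk_le_mk_pointwise_nsmul_mul_mk_inf_torsionBy (n : ℕ) (S : AddSubgroup G) :
    #S ≤ #↥(n • S) * #(S ⊓ torsionBy G n : AddSubgroup G) := by
  choose lift hlift hnlift using fun b : ↥(n • S) => (mem_smul_pointwise_iff_exists _ _ _).1 b.2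
  let F : S → ↥(n • S) × ↥(S ⊓ torsionBy G n) := fun s =>
    let b : ↥(n • S) := ⟨n • s, smul_mem_pointwise_smul _ _ _ s.2⟩
    (b, ⟨s - lift b, mem_inf.2 ⟨sub_mem s.2 (hlift b),
      torsionBy.nsmul_iff.2 (by rw [smul_sub, hnlift, sub_self])⟩⟩)
  have hF : Function.Injective F := by
    intro s t hst
    obtain ⟨hb, hst'⟩ := Prod.ext_iff.1 hst
    have hval := congrArg Subtype.val hst'
    simp only [F] at hb hval
    rw [hb] at hval
    exact Subtype.ext (sub_left_inj.1 hval)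
  simpa using mk_le_of_injective hF

lemma mk_inf_torsionBy_mul_le (M : AddSubgroup G) (a b : ℕ) :
    #(M ⊓ torsionBy G ↑(a * b) : AddSubgroup G) ≤
      #(M ⊓ torsionBy G b : AddSubgroup G) * #(M ⊓ torsionBy G a : AddSubgroup G) := by
  refine (mk_le_mk_pointwise_nsmul_mul_mk_inf_torsionBy a _).trans
    (mul_le_mul' (mk_le_mk_of_subset ?_) (mk_le_mk_of_subset ?_))
  · intro x hx
    obtain ⟨y, hy, rfl⟩ := (mem_smul_pointwise_iff_exists _ _ _).1 hx
    obtain ⟨hyM, hy⟩ := mem_inf.1 hy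
    rw [torsionBy.nsmul_iff, mul_comm, mul_smul] at hy
    exact mem_inf.2 ⟨nsmul_mem hyM a, torsionBy.nsmul_iff.2 hy⟩
  · exact fun x hx => mem_inf.2 ⟨(mem_inf.1 (mem_inf.1 hx).1).1, (mem_inf.1 hx).2⟩

lemma mk_le_mk_pointwise_nsmul_of_forall_prime {d : ℕ} (hd : 0 < d) {M : AddSubgroup G}
    (hinf : ℵ₀ ≤ #↥(d • M)) (h : ∀ p : ℕ, p.Prime → ∀ x ∈ M, p • x = 0 → x ∈ d • M) :
    #M ≤ #↥(d • M) := by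
  have htors : ∀ n : ℕ, n ≠ 0 → #(M ⊓ torsionBy G n : AddSubgroup G) ≤ #↥(d • M) := by
    intro n
    induction n using Nat.recOnMul with
    | zero => exact fun h0 => absurd rfl h0
    | one =>
      refine fun _ => (le_one_iff_subsingleton.2 ⟨fun x y => Subtype.ext ?_⟩).trans
        (one_le_aleph0.trans hinf)
      have hx := torsionBy.nsmul_iff.1 (mem_inf.1 x.2).2
      have hy := torsionBy.nsmul_iff.1 (mem_inf.1 y.2).2
      rw [one_smul] at hx hy
      rw [hx, hy]
    | prime p hp =>
      refine fun _ => mk_le_mk_of_subset fun x hx => ?_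
      exact h p hp x (mem_inf.1 hx).1 (torsionBy.nsmul_iff.1 (mem_inf.1 hx).2)
    | mul a b iha ihb =>
      intro hab
      exact (mk_inf_torsionBy_mul_le M a b).trans ((mul_le_mul' (ihb (right_ne_zero_of_mul hab))
        (iha (left_ne_zero_of_mul hab))).trans (mul_eq_self hinf).le)
  calc #M ≤ #↥(d • M) * #(M ⊓ torsionBy G d : AddSubgroup G) :=
        mk_le_mk_pointwise_nsmul_mul_mk_inf_torsionBy d M
    _ ≤ #↥(d • M) * #↥(d • M) := mul_le_mul' le_rfl (htors d hd.ne')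
    _ = #↥(d • M) := mul_eq_self hinf

theorem exists_isPure_of_mk_pointwise_nsmul_lt {d : ℕ} (hd : 0 < d) {M : AddSubgroup G}
    (hinf : ℵ₀ ≤ #↥(d • M)) (hlt : #↥(d • M) < #M) :
    ∃ W ≤ M, W ≠ ⊥ ∧ W.IsPure M ∧ ∀ w ∈ W, d • w = 0 := by
  by_contra hW
  refine hlt.not_ge (mk_le_mk_pointwise_nsmul_of_forall_prime hd hinf fun p hp x hxM hpx => ?_)
  by_contra hx
  exact hW (exists_isPure_of_notMem_pointwise_nsmul hp hd hxM hpx hx)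

lemma exists_nsmul_eq_zero_of_finite {d : ℕ} (hd : 0 < d) {S : AddSubgroup G}
    (hfin : Finite ↥(d • S)) : ∃ m, 0 < m ∧ ∀ x ∈ S, m • x = 0 := by
  refine ⟨Nat.card ↥(d • S) * d, Nat.mul_pos Nat.card_pos hd, fun x hx => ?_⟩
  rw [mul_smul]
  exact congrArg Subtype.val
    (card_nsmul_eq_zero' (x := (⟨d • x, smul_mem_pointwise_smul _ _ _ hx⟩ : ↥(d • S))))

variable (G) in
lemma exists_maximal_isPure_bounded (d : ℕ) :
    ∃ V : AddSubgroup G, Maximal (fun V : AddSubgroup G => V.IsPure ⊤ ∧ ∀ x ∈ V, d • x = 0) V := by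
  obtain ⟨V, -, hV⟩ := zorn_le_nonempty₀ {V : AddSubgroup G | V.IsPure ⊤ ∧ ∀ x ∈ V, d • x = 0}
    (fun c hcs hc V₀ hV₀ => by
      have hmem {x : G} : x ∈ sSup c ↔ ∃ V ∈ c, x ∈ V :=
        mem_sSup_of_directedOn ⟨V₀, hV₀⟩ hc.directedOn
      refine ⟨sSup c, ⟨fun n x hx => ?_, fun x hx => ?_⟩, fun _ => le_sSup⟩
      · obtain ⟨V, hVc, hxV⟩ := hmem.1 (mem_inf.1 hx).1
        exact pointwise_nsmul_mono n (le_sSup hVc)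
          ((hcs hVc).1 n (mem_inf.2 ⟨hxV, (mem_inf.1 hx).2⟩))
      · obtain ⟨V, hVc, hxV⟩ := hmem.1 hx
        exact (hcs hVc).2 x hxV)
    ⊥ ⟨fun n => inf_le_left.trans bot_le, fun x hx => by rw [mem_bot.1 hx, smul_zero]⟩
  exact ⟨V, hV⟩

lemma mk_le_mk_pointwise_nsmul_of_maximal {d : ℕ} (hd : 0 < d) {V M : AddSubgroup G}
    (hV : Maximal (fun V : AddSubgroup G => V.IsPure ⊤ ∧ ∀ x ∈ V, d • x = 0) V)
    (hVM : Disjoint V M) (hsum : V ⊔ M = ⊤) (hinf : ℵ₀ ≤ #↥(d • M)) : #M ≤ #↥(d • M) := by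
  refine not_lt.1 fun hlt => ?_
  obtain ⟨W, hWM, hW0, hWpure, hWd⟩ := exists_isPure_of_mk_pointwise_nsmul_lt hd hinf hlt
  have hVW : V ⊔ W ≤ V := hV.le_of_ge ⟨hV.prop.1.sup hVM hsum hWM hWpure, fun x hx => ?_⟩
    le_sup_left
  · exact hW0 (eq_bot_iff.2 fun w hw =>
      mem_bot.2 (disjoint_def.1 hVM (hVW (mem_sup_right hw)) (hWM hw)))
  · obtain ⟨v, hv, w, hw, rfl⟩ := mem_sup.1 hx
    rw [smul_add, hV.prop.2 v hv, hWd w hw, add_zero]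

end AddSubgroup

open AddSubgroup

lemma mk_nsmulRange {G : Type} [AddCommGroup G] (n : ℕ) (M : AddSubgroup G) :
    #(nsmulRange n M) = #↥(n • M) := by
  have hmap : (nsmulRange n M).map M.subtype = n • M := by
    ext x
    simp only [nsmulRange, mem_map, AddMonoidHom.mem_range, mem_smul_pointwise_iff_exists]
    constructor
    · rintro ⟨_, ⟨y, rfl⟩, rfl⟩
      exact ⟨y, y.2, rfl⟩
    · rintro ⟨s, hs, rfl⟩
      exact ⟨_, ⟨⟨s, hs⟩, rfl⟩, rfl⟩
  rw [← hmap]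
  exact mk_congr (equivMapOfInjective _ _ M.subtype_injective).toEquiv

/-- Every abelian group `G` decomposes as `G = K ⊕ M` with `K` a bounded torsion group and
`M` a `w`-divisible group. -/
theorem exists_bounded_wDivisible_decomposition (G : Type) [AddCommGroup G] :
    ∃ K M : AddSubgroup G, IsCompl K M ∧
      (∃ m : ℕ, 0 < m ∧ ∀ x ∈ K, m • x = 0) ∧
      WDivisible ↥M := by
  obtain ⟨_, ⟨d, hd, rfl⟩, hmin⟩ := wellFounded_lt.has_min
    ((fun n : ℕ => #↥(n • (⊤ : AddSubgroup G))) '' {n | 0 < n}) ⟨_, 1, Nat.one_pos, rfl⟩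
  by_cases hfin : #↥(d • (⊤ : AddSubgroup G)) < ℵ₀
  · refine ⟨⊤, ⊥, isCompl_top_bot, exists_nsmul_eq_zero_of_finite hd (lt_aleph0_iff_finite.1 hfin),
      fun n _ => ?_⟩
    rw [mk_nsmulRange, pointwise_nsmul_eq_bot_iff.2 fun x hx => by rw [mem_bot.1 hx, smul_zero]]
  obtain ⟨V, hV⟩ := exists_maximal_isPure_bounded G d
  obtain ⟨M, hVM, hsum⟩ := exists_disjoint_sup_eq_of_isPure hd le_top hV.prop.1 hV.prop.2
  have hdM : d • M = d • ⊤ := by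
    rw [← hsum, pointwise_nsmul_sup, pointwise_nsmul_eq_bot_iff.2 hV.prop.2, bot_sup_eq]
  have hM : #M ≤ #↥(d • ⊤ : AddSubgroup G) :=
    hdM ▸ mk_le_mk_pointwise_nsmul_of_maximal hd hV hVM hsum (hdM ▸ not_lt.1 hfin)
  refine ⟨V, M, ⟨hVM, codisjoint_iff.2 hsum⟩, ⟨d, hd, hV.prop.2⟩, fun n hn => ?_⟩
  rw [mk_nsmulRange]
  refine le_antisymm (mk_le_mk_of_subset (pointwise_nsmul_le_self n M)) ?_
  calc #M ≤ #↥(d • ⊤ : AddSubgroup G) := hM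
    _ ≤ #↥((n * d) • ⊤ : AddSubgroup G) := not_lt.1 (hmin _ ⟨n * d, Nat.mul_pos hn hd, rfl⟩)
    _ ≤ #↥(n • M) := mk_le_mk_of_subset (by
        rw [mul_smul, ← hdM]
        exact pointwise_nsmul_mono n (pointwise_nsmul_le_self d M))
end

section
/- Let σ be an infinite cardinal. Every abelian group K of finite exponent admits a decomposition K = L ⊕ N where |L| < σ and N is isomorphic to the direct sum of σ copies of itself (N ≅ N^(σ)). -/
open Cardinal

namespace SigmaHomog

/-! ### Generic `AddEquiv` helpers -/

def piSumAddEquiv {α β : Type*} (γ : α ⊕ β → Type*) [∀ x, AddCommMonoid (γ x)] :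
    (∀ x, γ x) ≃+ (∀ a, γ (Sum.inl a)) × (∀ b, γ (Sum.inr b)) where
  toFun f := (fun a => f (Sum.inl a), fun b => f (Sum.inr b))
  invFun p x := Sum.rec p.1 p.2 x
  left_inv f := by funext x; cases x <;> rfl
  right_inv p := rfl
  map_add' f g := rfl

def piSubtypeProdAddEquiv {ι : Type*} (p : ι → Prop) [DecidablePred p] (γ : ι → Type*)
    [∀ i, AddCommMonoid (γ i)] :
    (∀ i, γ i) ≃+ (∀ i : {x // p x}, γ i) × (∀ i : {x // ¬ p x}, γ i) :=
  { Equiv.piEquivPiSubtypeProd p γ with map_add' := fun _ _ => rfl }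

def piCongrLeftAddEquiv' {α β : Type*} (γ : α → Type*) [∀ a, AddCommMonoid (γ a)] (e : α ≃ β) :
    (∀ a, γ a) ≃+ (∀ b, γ (e.symm b)) :=
  { Equiv.piCongrLeft' γ e with map_add' := fun _ _ => rfl }

def piFinSuccAddEquiv {n : ℕ} (γ : Fin (n + 1) → Type*) [∀ i, AddCommMonoid (γ i)] :
    (∀ i, γ i) ≃+ γ 0 × (∀ i : Fin n, γ i.succ) where
  toFun f := (f 0, fun i => f i.succ)
  invFun p := Fin.cons p.1 p.2
  left_inv f := by
    funext i
    refine Fin.cases ?_ ?_ i <;> simp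
  right_inv p := by ext <;> simp
  map_add' f g := rfl

def addEquivOfSubsingleton {M N : Type*} [AddCommMonoid M] [AddCommMonoid N]
    [Subsingleton M] [Subsingleton N] : M ≃+ N where
  toFun _ := 0
  invFun _ := 0
  left_inv _ := Subsingleton.elim _ _
  right_inv _ := Subsingleton.elim _ _
  map_add' _ _ := Subsingleton.elim _ _

instance {α M : Type*} [Zero M] [Subsingleton M] : Subsingleton (α →₀ M) :=
  ⟨fun f g => Finsupp.ext fun a => Subsingleton.elim _ _⟩

/-- `Finsupp` into a product decomposes as a product of `Finsupp`s. -/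
noncomputable def finsuppProdAddEquiv {α M N : Type*} [AddCommMonoid M] [AddCommMonoid N] :
    (α →₀ M × N) ≃+ (α →₀ M) × (α →₀ N) where
  toFun f := (f.mapRange Prod.fst rfl, f.mapRange Prod.snd rfl)
  invFun p := p.1.mapRange (fun m => (m, 0)) rfl + p.2.mapRange (fun n => (0, n)) rfl
  left_inv f := by
    ext a
    · simp [Finsupp.mapRange_apply]
    · simp [Finsupp.mapRange_apply]
  right_inv p := by
    ext a
    · simp [Finsupp.mapRange_apply]
    · simp [Finsupp.mapRange_apply]
  map_add' f g := by
    ext a <;> simp [Finsupp.mapRange_apply]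

def piMapHom {J : Type*} {F G : J → Type*} [∀ j, AddCommMonoid (F j)] [∀ j, AddCommMonoid (G j)]
    (g : ∀ j, F j →+ G j) : (∀ j, F j) →+ (∀ j, G j) where
  toFun z j := g j (z j)
  map_zero' := funext fun j => map_zero _
  map_add' a b := funext fun j => map_add _ _ _

lemma piMapHom_single {J : Type*} [DecidableEq J] {F G : J → Type*} [∀ j, AddCommMonoid (F j)]
    [∀ j, AddCommMonoid (G j)] (g : ∀ j, F j →+ G j) (j : J) (v : F j) :
    piMapHom g (Pi.single j v) = Pi.single j (g j v) := by
  funext j'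
  rcases eq_or_ne j' j with rfl | h
  · simp [piMapHom]
  · simp [piMapHom, Pi.single_eq_of_ne h]

end SigmaHomog

namespace SigmaHomog

/-! ### Cardinality helpers -/

theorem mk_finsupp_lt {σ : Cardinal} (hσ : Cardinal.aleph0 ≤ σ) (I A : Type) [Zero A] [Finite A]
    (hI : Cardinal.mk I < σ) : Cardinal.mk (I →₀ A) < σ := by
  rcases finite_or_infinite I with h | h
  · haveI : Finite (I →₀ A) := Finite.of_equiv _ Finsupp.equivFunOnFinite.symm
    exact (Cardinal.lt_aleph0_of_finite _).trans_le hσ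
  · haveI : Infinite (I × A) := Prod.infinite_of_left
    have h1 : Cardinal.mk (I →₀ A) ≤ Cardinal.mk (Finset (I × A)) :=
      Cardinal.mk_le_of_injective (Finsupp.graph_injective I A)
    rw [Cardinal.mk_finset_of_infinite] at h1
    have h2 : Cardinal.mk (I × A) = Cardinal.mk I * Cardinal.mk A := by
      rw [Cardinal.mk_prod, Cardinal.lift_id, Cardinal.lift_id]
    refine lt_of_le_of_lt (h1.trans_eq h2) ?_
    exact Cardinal.mul_lt_of_lt hσ hI ((Cardinal.lt_aleph0_of_finite A).trans_le hσ)

theorem mk_pi_lt_fin {σ : Cardinal} (hσ : Cardinal.aleph0 ≤ σ) :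
    ∀ (n : ℕ) (G : Fin n → Type) (_ : ∀ i, Cardinal.mk (G i) < σ),
      Cardinal.mk (∀ i, G i) < σ := by
  intro n
  induction n with
  | zero =>
    intro G _
    have : Subsingleton (∀ i : Fin 0, G i) := ⟨fun a b => funext fun i => i.elim0⟩
    exact (Cardinal.le_one_iff_subsingleton.mpr this).trans_lt
      (lt_of_lt_of_le Cardinal.one_lt_aleph0 hσ)
  | succ n IH =>
    intro G hG
    have e : (∀ i, G i) ≃ G 0 × (∀ i : Fin n, G i.succ) := (Fin.consEquiv G).symm
    rw [Cardinal.mk_congr e, Cardinal.mk_prod, Cardinal.lift_id, Cardinal.lift_id]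
    exact Cardinal.mul_lt_of_lt hσ (hG 0) (IH _ fun i => hG i.succ)

theorem mk_pi_lt {σ : Cardinal} (hσ : Cardinal.aleph0 ≤ σ) (J : Type) [Finite J]
    (G : J → Type) (hG : ∀ j, Cardinal.mk (G j) < σ) : Cardinal.mk (∀ j, G j) < σ := by
  obtain ⟨n, ⟨e⟩⟩ := Finite.exists_equiv_fin J
  have h := mk_pi_lt_fin hσ n (fun i => G (e.symm i)) (fun i => hG _)
  rwa [← Cardinal.mk_congr (Equiv.piCongrLeft' G e)] at h

end SigmaHomog

namespace SigmaHomog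

/-! ### σ-homogeneity helpers -/

variable {σ : Cardinal}

/-- "`M` is σ-homogeneous": `M ≃+ M^(σ)`. -/
def Homog (σ : Cardinal) (M : Type) [AddCommGroup M] : Prop :=
  Nonempty (M ≃+ (σ.out →₀ M))

theorem Homog.congr {M N : Type} [AddCommGroup M] [AddCommGroup N] (e : M ≃+ N)
    (h : Homog σ N) : Homog σ M := by
  obtain ⟨u⟩ := h
  exact ⟨(e.trans u).trans (Finsupp.mapRange.addEquiv e.symm)⟩

theorem Homog.prod {M N : Type} [AddCommGroup M] [AddCommGroup N] (hM : Homog σ M)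
    (hN : Homog σ N) : Homog σ (M × N) := by
  obtain ⟨u⟩ := hM; obtain ⟨v⟩ := hN
  exact ⟨(AddEquiv.prodCongr u v).trans finsuppProdAddEquiv.symm⟩

theorem homog_pi_fin :
    ∀ (n : ℕ) (G : Fin n → Type) (_ : ∀ i, AddCommGroup (G i)) (_ : ∀ i, Homog σ (G i)),
      Homog σ (∀ i, G i) := by
  intro n
  induction n with
  | zero =>
    intro G instG _
    have : Subsingleton (∀ i : Fin 0, G i) := ⟨fun a b => funext fun i => i.elim0⟩
    exact ⟨addEquivOfSubsingleton⟩
  | succ n IH =>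
    intro G instG hG
    have e : (∀ i, G i) ≃+ G 0 × (∀ i : Fin n, G i.succ) := piFinSuccAddEquiv G
    exact Homog.congr e ((hG 0).prod (IH _ _ fun i => hG i.succ))

theorem homog_pi (J : Type) [Finite J] (G : J → Type) [instG : ∀ j, AddCommGroup (G j)]
    (hG : ∀ j, Homog σ (G j)) : Homog σ (∀ j, G j) := by
  obtain ⟨n, ⟨e⟩⟩ := Finite.exists_equiv_fin J
  exact Homog.congr (piCongrLeftAddEquiv' G e) (homog_pi_fin n _ _ fun i => hG _)

/-- A `Finsupp` over a `σ`-large index type is `σ`-homogeneous. -/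
theorem homog_finsupp (hσ : Cardinal.aleph0 ≤ σ) (I A : Type) [AddCommGroup A]
    (hI : σ ≤ Cardinal.mk I) : Homog σ (I →₀ A) := by
  have h1 : Cardinal.mk (σ.out × I) = Cardinal.mk I := by
    rw [Cardinal.mk_prod, Cardinal.lift_id, Cardinal.lift_id, Cardinal.mk_out]
    exact Cardinal.mul_eq_right (hσ.trans hI) hI
      (ne_of_gt (lt_of_lt_of_le Cardinal.aleph0_pos hσ))
  obtain ⟨eq⟩ := Cardinal.eq.mp h1
  exact ⟨((Finsupp.domCongr eq.symm).trans
    (Finsupp.finsuppProdLEquiv ℤ (M := A)).toAddEquiv : (I →₀ A) ≃+ _)⟩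

/-! ### From an external product decomposition to internal complementary subgroups -/

theorem exists_isCompl_of_equiv_prod {K M P : Type} [AddCommGroup K] [AddCommGroup M]
    [AddCommGroup P] (e : K ≃+ M × P) :
    ∃ L N : AddSubgroup K, IsCompl L N ∧ Nonempty (↥L ≃+ M) ∧ Nonempty (↥N ≃+ P) := by
  set L : AddSubgroup K := ((AddMonoidHom.snd M P).comp e.toAddMonoidHom).ker with hL
  set N : AddSubgroup K := ((AddMonoidHom.fst M P).comp e.toAddMonoidHom).ker with hN
  have hLmem : ∀ x : K, x ∈ L ↔ (e x).2 = 0 := fun x => Iff.rfl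
  have hNmem : ∀ x : K, x ∈ N ↔ (e x).1 = 0 := fun x => Iff.rfl
  refine ⟨L, N, ⟨?_, ?_⟩, ⟨?_⟩, ⟨?_⟩⟩
  · rw [AddSubgroup.disjoint_def]
    intro x hx1 hx2
    have : e x = 0 := Prod.ext ((hNmem x).mp hx2) ((hLmem x).mp hx1)
    simpa using e.injective (this.trans (map_zero e).symm)
  · rw [codisjoint_iff_le_sup]
    intro x _
    rw [AddSubgroup.mem_sup]
    refine ⟨e.symm ((e x).1, 0), ?_, e.symm (0, (e x).2), ?_, ?_⟩
    · rw [hLmem]; simp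
    · rw [hNmem]; simp
    · apply e.injective
      rw [map_add]
      simp [Prod.ext_iff]
  · exact
      { toFun := fun l => (e l.1).1
        invFun := fun m => ⟨e.symm (m, 0), by rw [hLmem]; simp⟩
        left_inv := fun l => by
          apply Subtype.ext
          have h2 : (e l.1).2 = 0 := (hLmem l.1).mp l.2
          have : ((e l.1).1, (0 : P)) = e l.1 := by rw [← h2]
          simp [this]
        right_inv := fun m => by simp
        map_add' := fun a b => by simp }
  · exact
      { toFun := fun l => (e l.1).2
        invFun := fun m => ⟨e.symm (0, m), by rw [hNmem]; simp⟩
        left_inv := fun l => by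
          apply Subtype.ext
          have h2 : (e l.1).1 = 0 := (hNmem l.1).mp l.2
          have : ((0 : M), (e l.1).2) = e l.1 := by rw [← h2]
          simp [this]
        right_inv := fun m => by simp
        map_add' := fun a b => by simp }

end SigmaHomog

namespace SigmaHomog

/-! ### Hom extensionality on generators of `Π j, (I j →₀ ZMod (D j))` -/

theorem natCast_smul_one {n t : ℕ} : ((t : ℕ) : ZMod n) = t • (1 : ZMod n) := by
  simp [nsmul_eq_mul]

theorem zmod_eq_natCast_val {n : ℕ} [NeZero n] (c : ZMod n) : ∃ t : ℕ, c = ((t : ℕ) : ZMod n) :=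
  ⟨c.val, (ZMod.natCast_rightInverse c).symm⟩

theorem pi_finsupp_zmod_hom_ext {J : Type} [Finite J] [DecidableEq J] {I : J → Type}
    {D : J → ℕ} (hD : ∀ j, 0 < D j) {K : Type} [AddCommMonoid K]
    (g₁ g₂ : (∀ j, (I j →₀ ZMod (D j))) →+ K)
    (h : ∀ j i, g₁ (Pi.single j (Finsupp.single i (1 : ZMod (D j)))) =
      g₂ (Pi.single j (Finsupp.single i (1 : ZMod (D j))))) : g₁ = g₂ := by
  apply AddMonoidHom.functions_ext
  intro j v
  have : ∀ i c, g₁ (Pi.single j (Finsupp.single i c)) = g₂ (Pi.single j (Finsupp.single i c)) := by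
    intro i c
    haveI : NeZero (D j) := ⟨(hD j).ne'⟩
    obtain ⟨t, rfl⟩ := zmod_eq_natCast_val c
    rw [natCast_smul_one, ← Finsupp.smul_single, Pi.single_smul, map_nsmul, map_nsmul, h]
  -- now extend from singles to all of `I j →₀ ZMod (D j)`
  have hcomp : g₁.comp (AddMonoidHom.single (fun j => (I j →₀ ZMod (D j))) j) =
      g₂.comp (AddMonoidHom.single (fun j => (I j →₀ ZMod (D j))) j) :=
    Finsupp.addHom_ext fun i c => this i c
  exact DFunLike.congr_fun hcomp v

end SigmaHomog

namespace SigmaHomog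

/-! ### Prüfer's theorem for `p`-groups of bounded exponent -/

theorem zmod_lift_natCast {A : Type} [AddCommGroup A] {n : ℕ} (a : A)
    (ha : zmultiplesHom A a ((n : ℕ) : ℤ) = 0) (t : ℕ) :
    ZMod.lift n ⟨zmultiplesHom A a, ha⟩ ((t : ℕ) : ZMod n) = t • a := by
  have h1 : ((t : ℕ) : ZMod n) = ((t : ℤ) : ZMod n) := by push_cast; rfl
  rw [h1, ZMod.lift_coe, zmultiplesHom_apply, natCast_zsmul]

def subCongr {K : Type} [AddCommGroup K] (U : AddSubgroup K) :
    ↥(AddSubgroup.toIntSubmodule U) ≃+ ↥U where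
  toFun x := ⟨x.1, x.2⟩
  invFun x := ⟨x.1, x.2⟩
  left_inv _ := rfl
  right_inv _ := rfl
  map_add' _ _ := rfl

def subCongr2 {R T : Type} [Ring R] [AddCommGroup T] [Module R T] (C₀ : Submodule R T) :
    ↥C₀ ≃+ ↥(C₀.toAddSubgroup) where
  toFun x := ⟨x.1, x.2⟩
  invFun x := ⟨x.1, x.2⟩
  left_inv _ := rfl
  right_inv _ := rfl
  map_add' _ _ := rfl

theorem pgood (p : ℕ) (hp : p.Prime) :
    ∀ (k : ℕ) (K : Type) (instK : AddCommGroup K), (∀ x : K, p ^ k • x = 0) →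
      ∃ (J : Type) (_ : Finite J) (e : J → ℕ) (I : J → Type),
        (∀ j, 1 ≤ e j) ∧ Nonempty (K ≃+ ∀ j, (I j →₀ ZMod (p ^ e j))) := by
  intro k
  induction k with
  | zero =>
    intro K instK h
    haveI : Subsingleton K := ⟨fun a b => by
      have ha := h a; have hb := h b
      rw [pow_zero, one_smul] at ha hb
      rw [ha, hb]⟩
    haveI : Subsingleton (∀ j : PEmpty, ((fun _ : PEmpty => PEmpty) j →₀
        ZMod (p ^ (fun _ : PEmpty => 1) j))) := ⟨fun a b => funext fun j => j.elim⟩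
    exact ⟨PEmpty, inferInstance, fun _ => 1, fun _ => PEmpty, fun j => le_refl _,
      ⟨addEquivOfSubsingleton⟩⟩
  | succ k IH =>
    intro K instK h
    classical
    haveI : Fact p.Prime := ⟨hp⟩
    -- multiplication by p
    set f : K →+ K := AddMonoidHom.mk' (fun x => p • x) (fun a b => smul_add p a b) with hfdef
    have hfap : ∀ x : K, f x = p • x := fun x => rfl
    set S : AddSubgroup K := f.range with hSdef
    have hS : ∀ y : ↥S, p ^ k • y = 0 := by
      rintro ⟨_, x, rfl⟩
      apply Subtype.ext
      show p ^ k • (f x) = (0 : K)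
      rw [hfap, smul_smul, ← pow_succ]
      exact h x
    obtain ⟨J, hJfin, e, I, he, ⟨ψ⟩⟩ := IH ↥S inferInstance hS
    haveI := hJfin
    haveI : Fintype J := Fintype.ofFinite J
    haveI : DecidableEq J := Classical.decEq J
    haveI hne : ∀ n : ℕ, NeZero (p ^ n) := fun n => ⟨(pow_pos hp.pos n).ne'⟩
    -- notation
    set P := ∀ j, (I j →₀ ZMod (p ^ e j)) with hP
    set P' := ∀ j, (I j →₀ ZMod (p ^ (e j + 1))) with hP'
    set W := ∀ j, (I j →₀ ZMod p) with hW
    -- generators of S and lifts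
    set y : ∀ j, I j → ↥S := fun j i => ψ.symm (Pi.single j (Finsupp.single i 1)) with hy_def
    have hx' : ∀ j (i : I j), ∃ x : K, f x = (y j i : K) := fun j i => (y j i).2
    choose x hx using hx'
    have hy_tors : ∀ j (i : I j), p ^ e j • (y j i : K) = 0 := by
      intro j i
      have h1 : p ^ e j • (Pi.single j (Finsupp.single i (1 : ZMod (p ^ e j))) : P) = 0 := by
        rw [← Pi.single_smul, Finsupp.smul_single, ← natCast_smul_one, ZMod.natCast_self]
        simp
      have h2 : p ^ e j • y j i = 0 := by
        rw [hy_def]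
        simp only [← map_nsmul]
        rw [h1, map_zero]
      exact congrArg Subtype.val h2
    have hxt : ∀ j (i : I j), p ^ (e j + 1) • x j i = 0 := by
      intro j i
      rw [pow_succ, mul_smul, ← hfap, hx, hy_tors]
    -- the lifted homomorphism Φ : P' →+ K
    have hxz : ∀ j (i : I j), zmultiplesHom K (x j i) ((p ^ (e j + 1) : ℕ) : ℤ) = 0 := by
      intro j i
      rw [zmultiplesHom_apply, natCast_zsmul, hxt]
    set Φj : ∀ j, (I j →₀ ZMod (p ^ (e j + 1))) →+ K := fun j =>
      Finsupp.liftAddHom (fun i => ZMod.lift _ ⟨zmultiplesHom K (x j i), hxz j i⟩) with hΦjdef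
    set Φ : P' →+ K := ∑ j, (Φj j).comp (Pi.evalAddMonoidHom _ j) with hΦdef
    have hΦsingle : ∀ j v, Φ (Pi.single j v) = Φj j v := by
      intro j v
      rw [hΦdef, AddMonoidHom.finset_sum_apply, Finset.sum_eq_single j]
      · simp [Pi.evalAddMonoidHom]
      · intro j' _ hj'
        simp [Pi.evalAddMonoidHom, Pi.single_eq_of_ne hj']
      · intro hj; exact absurd (Finset.mem_univ j) hj
    have hΦnat : ∀ j (i : I j) (t : ℕ),
        Φ (Pi.single j (Finsupp.single i ((t : ℕ) : ZMod (p ^ (e j + 1))))) = t • x j i := by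
      intro j i t
      rw [hΦsingle, hΦjdef]
      dsimp only
      rw [Finsupp.liftAddHom_apply_single, zmod_lift_natCast]
    have hΦgen : ∀ j (i : I j),
        Φ (Pi.single j (Finsupp.single i (1 : ZMod (p ^ (e j + 1))))) = x j i := by
      intro j i
      have := hΦnat j i 1
      rw [Nat.cast_one, one_smul] at this
      exact this
    -- reduction homomorphism ρ : P' →+ P
    have hdvd : ∀ j, p ^ e j ∣ p ^ (e j + 1) := fun j => pow_dvd_pow p (Nat.le_succ _)
    set ρ : P' →+ P := piMapHom (fun j =>
      Finsupp.mapRange.addMonoidHom (ZMod.castHom (hdvd j) (ZMod (p ^ e j))).toAddMonoidHom)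
      with hρdef
    have hρgen : ∀ j (i : I j) (c : ZMod (p ^ (e j + 1))),
        ρ (Pi.single j (Finsupp.single i c)) =
          Pi.single j (Finsupp.single i (ZMod.castHom (hdvd j) (ZMod (p ^ e j)) c)) := by
      intro j i c
      rw [hρdef, piMapHom_single]
      simp
    -- ν : W →+ P'
    have hν0 : ∀ j, zmultiplesHom (ZMod (p ^ (e j + 1))) ((p ^ e j : ℕ) : ZMod (p ^ (e j + 1)))
        ((p : ℕ) : ℤ) = 0 := by
      intro j
      rw [zmultiplesHom_apply, natCast_zsmul, nsmul_eq_mul, ← Nat.cast_mul, ← pow_succ',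
        ZMod.natCast_self]
    set ν : W →+ P' := piMapHom (fun j =>
      Finsupp.mapRange.addMonoidHom (ZMod.lift p ⟨zmultiplesHom _ _, hν0 j⟩)) with hνdef
    -- ν'' : W →+ P
    have hν''0 : ∀ j, zmultiplesHom (ZMod (p ^ e j)) ((p ^ (e j - 1) : ℕ) : ZMod (p ^ e j))
        ((p : ℕ) : ℤ) = 0 := by
      intro j
      rw [zmultiplesHom_apply, natCast_zsmul, nsmul_eq_mul, ← Nat.cast_mul, ← pow_succ',
        Nat.sub_add_cancel (he j), ZMod.natCast_self]
    set ν'' : W →+ P := piMapHom (fun j =>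
      Finsupp.mapRange.addMonoidHom (ZMod.lift p ⟨zmultiplesHom _ _, hν''0 j⟩)) with hν''def
    -- the composite `g : P →+ K`
    set g : P →+ K := S.subtype.comp ψ.symm.toAddMonoidHom with hgdef
    have hggen : ∀ j (i : I j),
        g (Pi.single j (Finsupp.single i (1 : ZMod (p ^ e j)))) = (y j i : K) := fun j i => rfl
    have hgnat : ∀ j (i : I j) (t : ℕ),
        g (Pi.single j (Finsupp.single i ((t : ℕ) : ZMod (p ^ e j)))) = t • (y j i : K) := by
      intro j i t
      rw [natCast_smul_one, ← Finsupp.smul_single, Pi.single_smul, map_nsmul, hggen]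
    -- key identity (K1) : f ∘ Φ = g ∘ ρ
    have hK1 : f.comp Φ = g.comp ρ := by
      apply pi_finsupp_zmod_hom_ext (fun j => pow_pos hp.pos (e j + 1))
      intro j i
      rw [AddMonoidHom.comp_apply, AddMonoidHom.comp_apply, hΦgen, hx, hρgen, map_one, hggen]
    -- key identity (K3) : Φ ∘ ν = g ∘ ν''
    have hνgen : ∀ j (i : I j), ν (Pi.single j (Finsupp.single i (1 : ZMod p))) =
        Pi.single j (Finsupp.single i ((p ^ e j : ℕ) : ZMod (p ^ (e j + 1)))) := by
      intro j i
      rw [hνdef, piMapHom_single]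
      have h1 : (1 : ZMod p) = ((1 : ℕ) : ZMod p) := by rw [Nat.cast_one]
      simp only [Finsupp.mapRange.addMonoidHom_apply, Finsupp.mapRange_single]
      rw [h1, zmod_lift_natCast, one_smul]
    have hν''gen : ∀ j (i : I j), ν'' (Pi.single j (Finsupp.single i (1 : ZMod p))) =
        Pi.single j (Finsupp.single i ((p ^ (e j - 1) : ℕ) : ZMod (p ^ e j))) := by
      intro j i
      rw [hν''def, piMapHom_single]
      have h1 : (1 : ZMod p) = ((1 : ℕ) : ZMod p) := by rw [Nat.cast_one]
      simp only [Finsupp.mapRange.addMonoidHom_apply, Finsupp.mapRange_single]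
      rw [h1, zmod_lift_natCast, one_smul]
    have hK3 : Φ.comp ν = g.comp ν'' := by
      apply pi_finsupp_zmod_hom_ext (fun _ => hp.pos)
      intro j i
      rw [AddMonoidHom.comp_apply, AddMonoidHom.comp_apply, hνgen, hν''gen, hΦnat, hgnat]
      have h2 : p • x j i = (y j i : K) := by rw [← hfap, hx]
      rw [← h2, smul_smul, ← pow_succ, Nat.sub_add_cancel (he j)]
    -- injectivity of Φ
    have hΦinj : Function.Injective Φ := by
      rw [injective_iff_map_eq_zero]
      intro z hz
      have hρz : ρ z = 0 := by
        have h1 : g (ρ z) = 0 := by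
          have h1' := DFunLike.congr_fun hK1 z
          rw [AddMonoidHom.comp_apply, AddMonoidHom.comp_apply, hz, map_zero] at h1'
          exact h1'.symm
        exact (AddEquiv.map_eq_zero_iff ψ.symm).mp (Subtype.ext h1)
      set w : W := fun j => (z j).mapRange (fun c => ((c.val / p ^ e j : ℕ) : ZMod p))
        (by simp) with hwdef
      have hνw : ν w = z := by
        funext j
        apply Finsupp.ext
        intro i
        have h0 : ((z j i).val : ZMod (p ^ e j)) = 0 := by
          have h3 : (ρ z) j i = 0 := by rw [hρz]; rfl
          rw [hρdef] at h3
          have h4 : (piMapHom (fun j => Finsupp.mapRange.addMonoidHom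
              (ZMod.castHom (hdvd j) (ZMod (p ^ e j))).toAddMonoidHom) z) j i =
              ZMod.castHom (hdvd j) (ZMod (p ^ e j)) (z j i) := rfl
          rw [h4] at h3
          rwa [ZMod.castHom_apply, ← ZMod.natCast_val] at h3
        obtain ⟨t, ht⟩ := (ZMod.natCast_eq_zero_iff _ _).mp h0
        have hwji : w j i = ((t : ℕ) : ZMod p) := by
          rw [hwdef]
          show (((z j i).val / p ^ e j : ℕ) : ZMod p) = _
          rw [ht, Nat.mul_div_cancel_left t (pow_pos hp.pos _)]
        have h5 : (ν w) j i = ZMod.lift p ⟨zmultiplesHom _ _, hν0 j⟩ (w j i) := by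
          rw [hνdef]; rfl
        rw [h5, hwji, zmod_lift_natCast, nsmul_eq_mul, ← Nat.cast_mul, mul_comm, ← ht,
          ZMod.natCast_rightInverse (z j i)]
      have hν''w : ν'' w = 0 := by
        have hgν'' : g (ν'' w) = 0 := by
          have h1' := DFunLike.congr_fun hK3 w
          rw [AddMonoidHom.comp_apply, AddMonoidHom.comp_apply, hνw, hz] at h1'
          exact h1'.symm
        exact (AddEquiv.map_eq_zero_iff ψ.symm).mp (Subtype.ext hgν'')
      have hw0 : w = 0 := by
        funext j
        apply Finsupp.ext
        intro i
        have h6 : ZMod.lift p ⟨zmultiplesHom _ _, hν''0 j⟩ (w j i) = 0 := by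
          have h6' : (ν'' w) j i = 0 := by rw [hν''w]; rfl
          rw [hν''def] at h6'
          exact h6'
        haveI : NeZero p := ⟨hp.pos.ne'⟩
        obtain ⟨t, htc⟩ := zmod_eq_natCast_val (w j i)
        rw [htc, zmod_lift_natCast, nsmul_eq_mul, ← Nat.cast_mul] at h6
        have h7 : p ^ e j ∣ t * p ^ (e j - 1) := (ZMod.natCast_eq_zero_iff _ _).mp h6
        have h8 : p ∣ t := by
          obtain ⟨u, hu⟩ := h7
          refine ⟨u, ?_⟩
          have hpe : p ^ e j = p ^ (e j - 1) * p := by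
            rw [← pow_succ, Nat.sub_add_cancel (he j)]
          rw [hpe] at hu
          have h9 : p ^ (e j - 1) * t = p ^ (e j - 1) * (p * u) := by
            rw [mul_comm, hu, mul_assoc]
          exact Nat.eq_of_mul_eq_mul_left (pow_pos hp.pos _) h9
        show w j i = 0
        rw [htc, (ZMod.natCast_eq_zero_iff t p).mpr h8]
      rw [← hνw, hw0, map_zero]
    -- surjectivity of ρ
    have hρsurj : Function.Surjective ρ := by
      intro t
      have hsj : ∀ j, ∃ v : I j →₀ ZMod (p ^ (e j + 1)),
          Finsupp.mapRange.addMonoidHom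
            (ZMod.castHom (hdvd j) (ZMod (p ^ e j))).toAddMonoidHom v = t j := by
        intro j
        have hsurj := Finsupp.mapRange_surjective (α := I j)
          (⇑(ZMod.castHom (hdvd j) (ZMod (p ^ e j)))) (map_zero _)
          (ZMod.ringHom_surjective (ZMod.castHom (hdvd j) (ZMod (p ^ e j))))
        obtain ⟨v, hv⟩ := hsurj (t j)
        exact ⟨v, hv⟩
      choose v hv using hsj
      exact ⟨fun j => v j, funext fun j => hv j⟩
    -- the p-torsion subgroup T = ker f, as a ZMod p vector space
    set T : AddSubgroup K := f.ker with hTdef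
    have hT : ∀ t : ↥T, p • t = 0 := by
      rintro ⟨t, ht⟩
      apply Subtype.ext
      show p • t = (0 : K)
      rw [← hfap]
      exact ht
    haveI : Module (ZMod p) ↥T := AddCommGroup.zmodModule hT
    set B : AddSubgroup K := Φ.range with hBdef
    set B₀ : Submodule (ZMod p) ↥T := AddSubgroup.toZModSubmodule p (B.comap T.subtype) with hB₀def
    obtain ⟨C₀, hC₀⟩ := Submodule.exists_isCompl B₀
    set C : AddSubgroup K := C₀.toAddSubgroup.map T.subtype with hCdef
    have hmemCval : ∀ (c : ↥T), c ∈ C₀ → (c : K) ∈ C := by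
      intro c hc
      exact ⟨c, by simpa using hc, rfl⟩
    have hmemBval : ∀ (b : ↥T), b ∈ B₀ → (b : K) ∈ B := fun b hb => hb
    have hCB : IsCompl B C := by
      constructor
      · rw [AddSubgroup.disjoint_def]
        intro a haB haC
        obtain ⟨c, hc, rfl⟩ := haC
        have hcB₀ : c ∈ B₀ := haB
        have hc0 : c = 0 := (Submodule.disjoint_def.mp hC₀.disjoint) c hcB₀ hc
        rw [hc0]; rfl
      · rw [codisjoint_iff_le_sup]
        intro a _
        have hpa : f a ∈ S := ⟨a, rfl⟩
        obtain ⟨z, hz⟩ := hρsurj (ψ ⟨f a, hpa⟩)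
        have hfz : f (Φ z) = f a := by
          have h1 := DFunLike.congr_fun hK1 z
          rw [AddMonoidHom.comp_apply, AddMonoidHom.comp_apply] at h1
          rw [h1, hz, hgdef]
          show S.subtype (ψ.symm (ψ ⟨f a, hpa⟩)) = f a
          rw [AddEquiv.symm_apply_apply]
          rfl
        have hmemT : a - Φ z ∈ T := by
          show f (a - Φ z) = 0
          rw [map_sub, hfz, sub_self]
        have hsup : (⟨a - Φ z, hmemT⟩ : ↥T) ∈ B₀ ⊔ C₀ := by
          rw [hC₀.sup_eq_top]; trivial
        obtain ⟨b₀, hb₀, c₀, hc₀, hbc⟩ := Submodule.mem_sup.mp hsup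
        have hval : (b₀ : K) + (c₀ : K) = a - Φ z := congrArg Subtype.val hbc
        have haeq : a = (Φ z + (b₀ : K)) + (c₀ : K) := by
          have h2 : a = Φ z + ((b₀ : K) + (c₀ : K)) := by rw [hval]; abel
          rw [h2]; abel
        rw [haeq]
        have h1 : Φ z + (b₀ : K) ∈ B := add_mem ⟨z, rfl⟩ (hmemBval b₀ hb₀)
        exact add_mem (SetLike.le_def.mp le_sup_left h1)
          (SetLike.le_def.mp le_sup_right (hmemCval c₀ hc₀))
    -- assemble the final equivalence
    have eB : P' ≃+ ↥B := AddMonoidHom.ofInjective hΦinj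
    have hIsCompl2 : IsCompl (AddSubgroup.toIntSubmodule B) (AddSubgroup.toIntSubmodule C) :=
      AddSubgroup.toIntSubmodule.isCompl_iff.mp hCB
    have eK : K ≃+ ↥(AddSubgroup.toIntSubmodule B) × ↥(AddSubgroup.toIntSubmodule C) :=
      (Submodule.prodEquivOfIsCompl _ _ hIsCompl2).symm.toAddEquiv
    have eCmap : ↥(C₀.toAddSubgroup) ≃+ ↥C :=
      AddSubgroup.equivMapOfInjective C₀.toAddSubgroup T.subtype T.subtype_injective
    set ι : Type := ↥(Module.Basis.ofVectorSpaceIndex (ZMod p) ↥C₀) with hι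
    have eC0 : ↥C₀ ≃+ (ι →₀ ZMod p) := (Module.Basis.ofVectorSpace (ZMod p) ↥C₀).repr.toAddEquiv
    have ez : ZMod p ≃+ ZMod (p ^ 1) := by rw [pow_one]
    have eCfull : ↥(AddSubgroup.toIntSubmodule C) ≃+ (∀ _ : Unit, (ι →₀ ZMod (p ^ 1))) :=
      ((((subCongr C).trans eCmap.symm).trans (subCongr2 C₀).symm).trans
        (eC0.trans (Finsupp.mapRange.addEquiv ez))).trans (AddEquiv.piUnique (fun _ : Unit => (ι →₀ ZMod (p ^ 1)))).symm
    set I' : J ⊕ Unit → Type := Sum.elim I (fun _ => ι) with hI'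
    set e' : J ⊕ Unit → ℕ := Sum.elim (fun j => e j + 1) (fun _ => 1) with he'
    have final : K ≃+ ∀ j', (I' j' →₀ ZMod (p ^ e' j')) :=
      (eK.trans (AddEquiv.prodCongr ((subCongr B).trans eB.symm) eCfull)).trans
        (piSumAddEquiv (fun j' => (I' j' →₀ ZMod (p ^ e' j')))).symm
    refine ⟨J ⊕ Unit, inferInstance, e', I', ?_, ⟨final⟩⟩
    intro j'
    cases j' with
    | inl j => exact Nat.succ_le_succ (Nat.zero_le _)
    | inr u => exact le_refl 1

end SigmaHomog

namespace SigmaHomog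

/-! ### Coprime splitting -/

theorem coprime_split {K : Type} [AddCommGroup K] {a b : ℕ} (hab : Nat.Coprime a b)
    (h : ∀ x : K, (a * b) • x = 0) :
    ∃ A B : AddSubgroup K, (∀ x : ↥A, a • x = 0) ∧ (∀ x : ↥B, b • x = 0) ∧
      Nonempty (K ≃+ ↥A × ↥B) := by
  classical
  set fa : K →+ K := AddMonoidHom.mk' (fun x => a • x) (fun u v => smul_add a u v) with hfa
  set fb : K →+ K := AddMonoidHom.mk' (fun x => b • x) (fun u v => smul_add b u v) with hfb
  set A := fa.ker with hA
  set B := fb.ker with hB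
  have hg : ((1 : ℕ) : ℤ) = a * Int.gcdA a b + b * Int.gcdB a b := by
    have h1 := Int.gcd_eq_gcd_ab (a : ℤ) (b : ℤ)
    rw [Int.gcd_natCast_natCast, hab.gcd_eq_one] at h1
    exact h1
  have hab0 : ∀ x : K, ((a * b : ℕ) : ℤ) • x = 0 := fun x => by
    rw [natCast_zsmul]; exact h x
  have key : ∀ x : K, ∃ u ∈ A, ∃ v ∈ B, u + v = x := by
    intro x
    refine ⟨(b * Int.gcdB a b) • x, ?_, (a * Int.gcdA a b) • x, ?_, ?_⟩
    · rw [hA, AddMonoidHom.mem_ker]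
      show a • (((b : ℤ) * Int.gcdB a b) • x) = 0
      rw [← natCast_zsmul, smul_smul]
      have h2 : (a : ℤ) * ((b : ℤ) * Int.gcdB a b) = Int.gcdB a b * ((a * b : ℕ) : ℤ) := by
        push_cast; ring
      rw [h2, mul_smul, hab0 x, smul_zero]
    · rw [hB, AddMonoidHom.mem_ker]
      show b • (((a : ℤ) * Int.gcdA a b) • x) = 0
      rw [← natCast_zsmul, smul_smul]
      have h2 : (b : ℤ) * ((a : ℤ) * Int.gcdA a b) = Int.gcdA a b * ((a * b : ℕ) : ℤ) := by
        push_cast; ring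
      rw [h2, mul_smul, hab0 x, smul_zero]
    · rw [← add_zsmul]
      have h2 : (b : ℤ) * Int.gcdB a b + (a : ℤ) * Int.gcdA a b = ((1 : ℕ) : ℤ) := by
        rw [hg]; ring
      rw [h2]
      simp
  have hACB : IsCompl A B := by
    constructor
    · rw [AddSubgroup.disjoint_def]
      intro x hxA hxB
      have h1 : a • x = 0 := by rwa [hA, AddMonoidHom.mem_ker] at hxA
      have h2 : b • x = 0 := by rwa [hB, AddMonoidHom.mem_ker] at hxB
      have h3 : ((1 : ℕ) : ℤ) • x = x := by simp
      rw [← h3, hg, add_zsmul, mul_comm ((a : ℤ)) (Int.gcdA a b),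
        mul_comm ((b : ℤ)) (Int.gcdB a b), mul_zsmul, mul_zsmul,
        natCast_zsmul, natCast_zsmul, h1, h2, smul_zero, smul_zero, add_zero]
    · rw [codisjoint_iff_le_sup]
      intro x _
      obtain ⟨u, hu, v, hv, huv⟩ := key x
      rw [← huv]
      exact add_mem (SetLike.le_def.mp le_sup_left hu) (SetLike.le_def.mp le_sup_right hv)
  refine ⟨A, B, ?_, ?_, ?_⟩
  · rintro ⟨x, hx⟩
    apply Subtype.ext
    show a • x = (0 : K)
    rwa [hA, AddMonoidHom.mem_ker] at hx
  · rintro ⟨x, hx⟩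
    apply Subtype.ext
    show b • x = (0 : K)
    rwa [hB, AddMonoidHom.mem_ker] at hx
  · exact ⟨((Submodule.prodEquivOfIsCompl _ _
      (AddSubgroup.toIntSubmodule.isCompl_iff.mp hACB)).symm.toAddEquiv).trans
      (AddEquiv.prodCongr (subCongr A) (subCongr B))⟩

/-! ### Every bounded abelian group is good -/

theorem isGood_of_bounded : ∀ (m : ℕ), 0 < m → ∀ (K : Type) (instK : AddCommGroup K),
    (∀ x : K, m • x = 0) →
    ∃ (J : Type) (_ : Finite J) (d : J → ℕ) (I : J → Type),
      (∀ j, 0 < d j) ∧ Nonempty (K ≃+ ∀ j, (I j →₀ ZMod (d j))) := by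
  intro m
  induction m using Nat.strong_induction_on with
  | _ m IH =>
    intro hm K instK h
    by_cases hm1 : m = 1
    · subst hm1
      haveI : Subsingleton K := ⟨fun u v => by
        have hu := h u; have hv := h v
        rw [one_smul] at hu hv
        rw [hu, hv]⟩
      haveI : Subsingleton (∀ j : PEmpty, ((fun _ : PEmpty => PEmpty) j →₀
          ZMod ((fun _ : PEmpty => 1) j))) := ⟨fun u v => funext fun j => j.elim⟩
      exact ⟨PEmpty, inferInstance, fun _ => 1, fun _ => PEmpty, fun j => j.elim,
        ⟨addEquivOfSubsingleton⟩⟩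
    · have hm0 : m ≠ 0 := hm.ne'
      set p := m.minFac with hpdef
      have hp : p.Prime := Nat.minFac_prime hm1
      set α := m.factorization p with hαdef
      have hα : 0 < α := by
        rw [hαdef]
        exact Nat.Prime.factorization_pos_of_dvd hp hm0 (Nat.minFac_dvd m)
      have hqr : p ^ α * (m / p ^ α) = m := Nat.ordProj_mul_ordCompl_eq_self m p
      have hrpos : 0 < m / p ^ α := Nat.ordCompl_pos p hm0
      have hrm : m / p ^ α < m := by
        conv_rhs => rw [← hqr]
        exact Nat.lt_mul_iff_one_lt_left hrpos |>.mpr (Nat.one_lt_pow hα.ne' hp.one_lt)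
      have hco : Nat.Coprime (p ^ α) (m / p ^ α) :=
        Nat.Coprime.pow_left α (Nat.coprime_ordCompl hp hm0)
      obtain ⟨A, B, hA, hB, ⟨eAB⟩⟩ := coprime_split hco (by rw [hqr]; exact h)
      obtain ⟨J₁, hJ₁, e₁, I₁, he₁, ⟨ψ₁⟩⟩ := pgood p hp α ↥A inferInstance hA
      obtain ⟨J₂, hJ₂, d₂, I₂, hd₂, ⟨ψ₂⟩⟩ := IH (m / p ^ α) hrm hrpos ↥B inferInstance hB
      haveI := hJ₁; haveI := hJ₂
      refine ⟨J₁ ⊕ J₂, inferInstance, Sum.elim (fun j => p ^ e₁ j) d₂, Sum.elim I₁ I₂, ?_, ?_⟩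
      · intro j
        cases j with
        | inl j => exact pow_pos hp.pos _
        | inr j => exact hd₂ j
      · exact ⟨(eAB.trans (AddEquiv.prodCongr ψ₁ ψ₂)).trans
          (piSumAddEquiv (fun j' => (Sum.elim I₁ I₂ j' →₀
            ZMod (Sum.elim (fun j => p ^ e₁ j) d₂ j')))).symm⟩

end SigmaHomog

/-- Every abelian group `K` of finite exponent decomposes as `K = L ⊕ N` with `|L| < σ`
and `N` isomorphic to the direct sum of `σ` copies of itself, for any infinite cardinal `σ`. -/
theorem exists_small_and_sigma_homogeneous_decomposition
    (σ : Cardinal) (hσ : Cardinal.aleph0 ≤ σ)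
    (K : Type) [AddCommGroup K]
    (hbdd : ∃ m : ℕ, 0 < m ∧ ∀ x : K, m • x = 0) :
    ∃ L N : AddSubgroup K, IsCompl L N ∧ Cardinal.mk ↥L < σ ∧
      Nonempty (↥N ≃+ (σ.out →₀ ↥N)) := by
  classical
  obtain ⟨m, hm, hmK⟩ := hbdd
  obtain ⟨J, hJ, d, I, hd, ⟨φ⟩⟩ := SigmaHomog.isGood_of_bounded m hm K inferInstance hmK
  haveI := hJ
  set Big : J → Prop := fun j => σ ≤ Cardinal.mk (I j) with hBig
  set F : J → Type := fun j => (I j →₀ ZMod (d j)) with hF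
  have e2 : K ≃+ (∀ j : {x // ¬ Big x}, F j) × (∀ j : {x // Big x}, F j) :=
    (φ.trans (SigmaHomog.piSubtypeProdAddEquiv Big F)).trans AddEquiv.prodComm
  obtain ⟨L, N, hLN, ⟨eL⟩, ⟨eN⟩⟩ := SigmaHomog.exists_isCompl_of_equiv_prod e2
  refine ⟨L, N, hLN, ?_, ?_⟩
  · rw [Cardinal.mk_congr eL.toEquiv]
    apply SigmaHomog.mk_pi_lt hσ
    intro j
    haveI : NeZero (d j.1) := ⟨(hd j.1).ne'⟩
    exact SigmaHomog.mk_finsupp_lt hσ _ _ (not_le.mp j.2)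
  · have hb : SigmaHomog.Homog σ (∀ j : {x // Big x}, F j) := by
      apply SigmaHomog.homog_pi
      intro j
      exact SigmaHomog.homog_finsupp hσ _ _ j.2
    exact SigmaHomog.Homog.congr eN hb
end
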